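/- arXiv:1701.00853 — 10 statements merged into one kernel-verified Lean document; each statement's English description precedes it below -/
import Mathlib

section
/- Let L, T > 0, let m, n be real numbers, let S̄ : [0,L] → ℝ be bounded and measurable, and let (h,s) be a classical solution of the tear-film system with exponents (m,n) on [0,L]×[0,T]. Then the total mass of salt is conserved: for every t ∈ [0,T], ∫₀^L h(x,t) s(x,t) dx = ∫₀^L h(x,0) s(x,0) dx. -/
open Set MeasureTheory intervalIntegral Filter

open Set MeasureTheory

/-- A classical solution of the tear-film system
`h_t = −(hⁿ h_{xxx})_x − hᵐ(S̄ − s)`,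
`s_t = s_{xx} + (h_x/h − h^{n−1} h_{xxx}) s_x + s(S̄ − s) h^{m−1}`
on `[0,L] × [0,T]`, with `h > 0`, `h` four times and `s` twice continuously
differentiable in `x`, both continuously differentiable in `t` (all partial
derivatives jointly continuous), subject to the boundary conditions
`h_x = h_{xxx} = s_x = 0` at `x = 0` and `x = L`. -/
structure TearFilmSolution (L T m n : ℝ) (Sbar : ℝ → ℝ) where
  h : ℝ → ℝ → ℝ
  s : ℝ → ℝ → ℝ
  hx : ℝ → ℝ → ℝ
  hxx : ℝ → ℝ → ℝ
  hxxx : ℝ → ℝ → ℝ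
  hxxxx : ℝ → ℝ → ℝ
  ht : ℝ → ℝ → ℝ
  sx : ℝ → ℝ → ℝ
  sxx : ℝ → ℝ → ℝ
  st : ℝ → ℝ → ℝ
  h_pos : ∀ x ∈ Icc 0 L, ∀ t ∈ Icc 0 T, 0 < h x t
  hasDeriv_hx : ∀ t ∈ Icc 0 T, ∀ x ∈ Icc 0 L,
    HasDerivWithinAt (fun x' => h x' t) (hx x t) (Icc 0 L) x
  hasDeriv_hxx : ∀ t ∈ Icc 0 T, ∀ x ∈ Icc 0 L,
    HasDerivWithinAt (fun x' => hx x' t) (hxx x t) (Icc 0 L) x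
  hasDeriv_hxxx : ∀ t ∈ Icc 0 T, ∀ x ∈ Icc 0 L,
    HasDerivWithinAt (fun x' => hxx x' t) (hxxx x t) (Icc 0 L) x
  hasDeriv_hxxxx : ∀ t ∈ Icc 0 T, ∀ x ∈ Icc 0 L,
    HasDerivWithinAt (fun x' => hxxx x' t) (hxxxx x t) (Icc 0 L) x
  hasDeriv_ht : ∀ x ∈ Icc 0 L, ∀ t ∈ Icc 0 T,
    HasDerivWithinAt (fun t' => h x t') (ht x t) (Icc 0 T) t
  hasDeriv_sx : ∀ t ∈ Icc 0 T, ∀ x ∈ Icc 0 L,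
    HasDerivWithinAt (fun x' => s x' t) (sx x t) (Icc 0 L) x
  hasDeriv_sxx : ∀ t ∈ Icc 0 T, ∀ x ∈ Icc 0 L,
    HasDerivWithinAt (fun x' => sx x' t) (sxx x t) (Icc 0 L) x
  hasDeriv_st : ∀ x ∈ Icc 0 L, ∀ t ∈ Icc 0 T,
    HasDerivWithinAt (fun t' => s x t') (st x t) (Icc 0 T) t
  cont_h : ContinuousOn (fun p : ℝ × ℝ => h p.1 p.2) (Icc 0 L ×ˢ Icc 0 T)
  cont_s : ContinuousOn (fun p : ℝ × ℝ => s p.1 p.2) (Icc 0 L ×ˢ Icc 0 T)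
  cont_hx : ContinuousOn (fun p : ℝ × ℝ => hx p.1 p.2) (Icc 0 L ×ˢ Icc 0 T)
  cont_hxx : ContinuousOn (fun p : ℝ × ℝ => hxx p.1 p.2) (Icc 0 L ×ˢ Icc 0 T)
  cont_hxxx : ContinuousOn (fun p : ℝ × ℝ => hxxx p.1 p.2) (Icc 0 L ×ˢ Icc 0 T)
  cont_hxxxx : ContinuousOn (fun p : ℝ × ℝ => hxxxx p.1 p.2) (Icc 0 L ×ˢ Icc 0 T)
  cont_ht : ContinuousOn (fun p : ℝ × ℝ => ht p.1 p.2) (Icc 0 L ×ˢ Icc 0 T)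
  cont_sx : ContinuousOn (fun p : ℝ × ℝ => sx p.1 p.2) (Icc 0 L ×ˢ Icc 0 T)
  cont_sxx : ContinuousOn (fun p : ℝ × ℝ => sxx p.1 p.2) (Icc 0 L ×ˢ Icc 0 T)
  cont_st : ContinuousOn (fun p : ℝ × ℝ => st p.1 p.2) (Icc 0 L ×ˢ Icc 0 T)
  pde_h : ∀ x ∈ Icc 0 L, ∀ t ∈ Icc 0 T,
    ht x t = -(n * h x t ^ (n - 1) * hx x t * hxxx x t + h x t ^ n * hxxxx x t)
      - h x t ^ m * (Sbar x - s x t)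
  pde_s : ∀ x ∈ Icc 0 L, ∀ t ∈ Icc 0 T,
    st x t = sxx x t + (hx x t / h x t - h x t ^ (n - 1) * hxxx x t) * sx x t
      + s x t * (Sbar x - s x t) * h x t ^ (m - 1)
  bc : ∀ t ∈ Icc 0 T,
    hx 0 t = 0 ∧ hx L t = 0 ∧ hxxx 0 t = 0 ∧ hxxx L t = 0 ∧ sx 0 t = 0 ∧ sx L t = 0


/-- Conservation of the total mass of salt `Q(t) = ∫₀^L h s dx`. -/
theorem salt_mass_conservation
    (L T m n : ℝ) (hL : 0 < L) (hT : 0 < T)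
    (Sbar : ℝ → ℝ) (hSmeas : Measurable Sbar)
    (hSbdd : ∃ C : ℝ, ∀ x ∈ Icc (0:ℝ) L, |Sbar x| ≤ C)
    (sol : TearFilmSolution L T m n Sbar) :
    ∀ t ∈ Icc (0:ℝ) T,
      ∫ x in (0:ℝ)..L, sol.h x t * sol.s x t
        = ∫ x in (0:ℝ)..L, sol.h x 0 * sol.s x 0 := by
  intro t htT
  obtain ⟨ht0, htT'⟩ := htT
  set H := sol.h with hH
  set S := sol.s with hS
  -- the flux and the time-derivative of h*s
  set F : ℝ → ℝ → ℝ := fun x τ => sol.h x τ * sol.sx x τ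
      - sol.h x τ ^ n * sol.hxxx x τ * sol.s x τ with hF
  set G : ℝ → ℝ → ℝ := fun x τ => sol.ht x τ * sol.s x τ
      + sol.h x τ * sol.st x τ with hG
  -- joint continuity of G
  have contG2 : ContinuousOn (fun p : ℝ × ℝ => G p.1 p.2) (Icc 0 L ×ˢ Icc 0 T) :=
    (sol.cont_ht.mul sol.cont_s).add (sol.cont_h.mul sol.cont_st)
  -- continuity of G in x for fixed τ
  have contGx : ∀ τ ∈ Icc (0:ℝ) T, ContinuousOn (fun x => G x τ) (Icc 0 L) := by
    intro τ hτ
    have he : Continuous (fun x : ℝ => (x, τ)) := by fun_prop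
    have hmaps : MapsTo (fun x : ℝ => (x, τ)) (Icc 0 L) (Icc 0 L ×ˢ Icc 0 T) :=
      fun x hx => ⟨hx, hτ⟩
    exact contG2.comp he.continuousOn hmaps
  -- continuity of G in τ for fixed x
  have contGt : ∀ x ∈ Icc (0:ℝ) L, ContinuousOn (fun τ => G x τ) (Icc 0 T) := by
    intro x hx
    have he : Continuous (fun τ : ℝ => (x, τ)) := by fun_prop
    have hmaps : MapsTo (fun τ : ℝ => (x, τ)) (Icc 0 T) (Icc 0 L ×ˢ Icc 0 T) :=
      fun τ hτ => ⟨hx, hτ⟩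
    exact contG2.comp he.continuousOn hmaps
  -- Step A: for every τ, the space integral of G vanishes
  have keyA : ∀ τ ∈ Icc (0:ℝ) T, (∫ x in (0:ℝ)..L, G x τ) = 0 := by
    intro τ hτ
    have contFx : ContinuousOn (fun x => F x τ) (Icc 0 L) := by
      have he : Continuous (fun x : ℝ => (x, τ)) := by fun_prop
      have hmaps : MapsTo (fun x : ℝ => (x, τ)) (Icc 0 L) (Icc 0 L ×ˢ Icc 0 T) :=
        fun x hx => ⟨hx, hτ⟩
      have ch := sol.cont_h.comp he.continuousOn hmaps
      have csx := sol.cont_sx.comp he.continuousOn hmaps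
      have chxxx := sol.cont_hxxx.comp he.continuousOn hmaps
      have cs := sol.cont_s.comp he.continuousOn hmaps
      have chn : ContinuousOn (fun x => sol.h x τ ^ n) (Icc 0 L) :=
        ch.rpow_const (fun x hx => Or.inl (sol.h_pos x hx τ hτ).ne')
      exact (ch.mul csx).sub ((chn.mul chxxx).mul cs)
    have hderiv : ∀ x ∈ Ioo (0:ℝ) L, HasDerivWithinAt (fun x' => F x' τ) (G x τ) (Ioi x) x := by
      intro x hx
      have hxI : x ∈ Icc (0:ℝ) L := ⟨hx.1.le, hx.2.le⟩
      have hnb : Icc (0:ℝ) L ∈ nhds x := Icc_mem_nhds hx.1 hx.2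
      have hP : 0 < sol.h x τ := sol.h_pos x hxI τ hτ
      have dh : HasDerivAt (fun x' => sol.h x' τ) (sol.hx x τ) x :=
        (sol.hasDeriv_hx τ hτ x hxI).hasDerivAt hnb
      have ds : HasDerivAt (fun x' => sol.s x' τ) (sol.sx x τ) x :=
        (sol.hasDeriv_sx τ hτ x hxI).hasDerivAt hnb
      have dsx : HasDerivAt (fun x' => sol.sx x' τ) (sol.sxx x τ) x :=
        (sol.hasDeriv_sxx τ hτ x hxI).hasDerivAt hnb
      have dhxxx : HasDerivAt (fun x' => sol.hxxx x' τ) (sol.hxxxx x τ) x :=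
        (sol.hasDeriv_hxxxx τ hτ x hxI).hasDerivAt hnb
      have dhn : HasDerivAt (fun x' => sol.h x' τ ^ n)
          (sol.hx x τ * n * sol.h x τ ^ (n - 1)) x :=
        dh.rpow_const (Or.inl hP.ne')
      have D := (dh.mul dsx).sub (((dhn.mul dhxxx).mul ds))
      have hGeq : G x τ = (sol.hx x τ * sol.sx x τ + sol.h x τ * sol.sxx x τ)
          - ((sol.hx x τ * n * sol.h x τ ^ (n - 1) * sol.hxxx x τ
              + sol.h x τ ^ n * sol.hxxxx x τ) * sol.s x τ
            + sol.h x τ ^ n * sol.hxxx x τ * sol.sx x τ) := by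
        have e1 : sol.h x τ ^ (n - 1) * sol.h x τ = sol.h x τ ^ n := by
          rw [← Real.rpow_add_one hP.ne' (n - 1)]; ring_nf
        have e2 : sol.h x τ ^ (m - 1) * sol.h x τ = sol.h x τ ^ m := by
          rw [← Real.rpow_add_one hP.ne' (m - 1)]; ring_nf
        rw [hG]
        simp only [sol.pde_h x hxI τ hτ, sol.pde_s x hxI τ hτ]
        field_simp
        linear_combination (-(sol.hxxx x τ * sol.sx x τ)) * e1
          + (sol.s x τ * (Sbar x - sol.s x τ)) * e2
      rw [hGeq]
      exact D.hasDerivWithinAt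
    have hint : IntervalIntegrable (fun x => G x τ) volume 0 L :=
      ((contGx τ hτ).mono (by rw [uIcc_of_le hL.le])).intervalIntegrable
    have := intervalIntegral.integral_eq_sub_of_hasDeriv_right_of_le hL.le contFx hderiv hint
    rw [this]
    obtain ⟨b1, b2, b3, b4, b5, b6⟩ := sol.bc τ hτ
    simp [hF, b4, b6, b3, b5]
  -- Step B: fundamental theorem of calculus in time for each x
  have keyB : ∀ x ∈ Icc (0:ℝ) L,
      sol.h x t * sol.s x t - sol.h x 0 * sol.s x 0 = ∫ τ in (0:ℝ)..t, G x τ := by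
    intro x hx
    have contHS : ContinuousOn (fun τ => sol.h x τ * sol.s x τ) (Icc 0 t) := by
      have he : Continuous (fun τ : ℝ => (x, τ)) := by fun_prop
      have hmaps : MapsTo (fun τ : ℝ => (x, τ)) (Icc 0 t) (Icc 0 L ×ˢ Icc 0 T) :=
        fun τ hτ => ⟨hx, hτ.1, hτ.2.trans htT'⟩
      exact ((sol.cont_h.comp he.continuousOn hmaps)).mul
        ((sol.cont_s.comp he.continuousOn hmaps))
    have hderiv : ∀ τ ∈ Ioo (0:ℝ) t,
        HasDerivWithinAt (fun τ' => sol.h x τ' * sol.s x τ') (G x τ) (Ioi τ) τ := by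
      intro τ hτ
      have hτI : τ ∈ Icc (0:ℝ) T := ⟨hτ.1.le, (hτ.2.trans_le htT').le⟩
      have hnb : Icc (0:ℝ) T ∈ nhds τ := Icc_mem_nhds hτ.1 (hτ.2.trans_le htT')
      have dh : HasDerivAt (fun τ' => sol.h x τ') (sol.ht x τ) τ :=
        (sol.hasDeriv_ht x hx τ hτI).hasDerivAt hnb
      have ds : HasDerivAt (fun τ' => sol.s x τ') (sol.st x τ) τ :=
        (sol.hasDeriv_st x hx τ hτI).hasDerivAt hnb
      exact (dh.mul ds).hasDerivWithinAt
    have hint : IntervalIntegrable (fun τ => G x τ) volume 0 t :=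
      ((contGt x hx).mono (by rw [uIcc_of_le ht0]; exact Icc_subset_Icc le_rfl htT')).intervalIntegrable
    rw [intervalIntegral.integral_eq_sub_of_hasDeriv_right_of_le ht0 contHS hderiv hint]
  -- Step C: combine
  have contHS0 : ∀ u ∈ Icc (0:ℝ) T, ContinuousOn (fun x => sol.h x u * sol.s x u) (Icc 0 L) := by
    intro u hu
    have he : Continuous (fun x : ℝ => (x, u)) := by fun_prop
    have hmaps : MapsTo (fun x : ℝ => (x, u)) (Icc 0 L) (Icc 0 L ×ˢ Icc 0 T) :=
      fun x hx => ⟨hx, hu⟩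
    exact (sol.cont_h.comp he.continuousOn hmaps).mul (sol.cont_s.comp he.continuousOn hmaps)
  have intt : IntervalIntegrable (fun x => sol.h x t * sol.s x t) volume 0 L :=
    ((contHS0 t ⟨ht0, htT'⟩).mono (by rw [uIcc_of_le hL.le])).intervalIntegrable
  have int0 : IntervalIntegrable (fun x => sol.h x 0 * sol.s x 0) volume 0 L :=
    ((contHS0 0 ⟨le_rfl, hT.le⟩).mono (by rw [uIcc_of_le hL.le])).intervalIntegrable
  have hsub : (∫ x in (0:ℝ)..L, sol.h x t * sol.s x t)
      - (∫ x in (0:ℝ)..L, sol.h x 0 * sol.s x 0)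
      = ∫ x in (0:ℝ)..L, (sol.h x t * sol.s x t - sol.h x 0 * sol.s x 0) :=
    (intervalIntegral.integral_sub intt int0).symm
  have hcongr : (∫ x in (0:ℝ)..L, (sol.h x t * sol.s x t - sol.h x 0 * sol.s x 0))
      = ∫ x in (0:ℝ)..L, ∫ τ in (0:ℝ)..t, G x τ := by
    apply intervalIntegral.integral_congr
    intro x hx
    rw [uIcc_of_le hL.le] at hx
    exact keyB x hx
  -- Fubini
  have hintprod : Integrable (Function.uncurry G)
      ((volume.restrict (Ioc (0:ℝ) L)).prod (volume.restrict (Ioc (0:ℝ) t))) := by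
    rw [Measure.prod_restrict]
    have hK : IsCompact (Icc (0:ℝ) L ×ˢ Icc (0:ℝ) T) := isCompact_Icc.prod isCompact_Icc
    have : IntegrableOn (fun p : ℝ × ℝ => G p.1 p.2) (Icc 0 L ×ˢ Icc 0 T)
        (volume.prod volume) := by
      rw [← Measure.volume_eq_prod]
      exact contG2.integrableOn_compact hK
    exact (this.mono_set (prod_mono Ioc_subset_Icc_self
      (Ioc_subset_Icc_self.trans (Icc_subset_Icc le_rfl htT'))))
  have hswap : (∫ x in (0:ℝ)..L, ∫ τ in (0:ℝ)..t, G x τ)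
      = ∫ τ in (0:ℝ)..t, ∫ x in (0:ℝ)..L, G x τ := by
    simp only [intervalIntegral.integral_of_le hL.le, intervalIntegral.integral_of_le ht0]
    exact MeasureTheory.integral_integral_swap hintprod
  have hzero : (∫ τ in (0:ℝ)..t, ∫ x in (0:ℝ)..L, G x τ) = 0 := by
    rw [intervalIntegral.integral_of_le ht0]
    apply MeasureTheory.setIntegral_eq_zero_of_forall_eq_zero
    intro τ hτ
    exact keyA τ ⟨hτ.1.le, hτ.2.trans htT'⟩
  have : (∫ x in (0:ℝ)..L, sol.h x t * sol.s x t)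
      - (∫ x in (0:ℝ)..L, sol.h x 0 * sol.s x 0) = 0 := by
    rw [hsub, hcongr, hswap, hzero]
  linarith [this]
end

section
/- Let L, T > 0, let m, n be real numbers, let S̄ : [0,L] → ℝ be bounded and measurable, and let (h,s) be a classical solution of the tear-film system with exponents (m,n) on [0,L]×[0,T]. Then the total non-conservative loss satisfies ∫₀^T ∫₀^L h(x,t)ᵐ (S̄(x) − s(x,t)) dx dt = ∫₀^L h(x,0) dx − ∫₀^L h(x,T) dx, and in particular, since h > 0, it is bounded above by ∫₀^L h(x,0) dx. -/
open Set MeasureTheory intervalIntegral Filter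

open Set MeasureTheory

/-!
Integrating the equation for `h` over `[0,L]`, the divergence term `(hⁿ h_{xxx})_x` contributes
the boundary values of the flux `hⁿ h_{xxx}`, which vanish since `h_{xxx} = 0` at both ends. Hence
the spatial integral of the loss `hᵐ (S̄ − s)` at time `t` is `-(d/dt) ∫₀^L h`, and integrating in
time (Fubini, then the fundamental theorem of calculus in `t`) gives the mass balance. Positivity
of `h` at time `T` gives the bound.
-/

section

variable {E : Type*} [NormedAddCommGroup E] [NormedSpace ℝ E] [CompleteSpace E]

theorem integral_eq_sub_of_hasDerivWithinAt_Icc {f f' : ℝ → E} {a b : ℝ} (hab : a ≤ b)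
    (hf : ∀ x ∈ Icc a b, HasDerivWithinAt f (f' x) (Icc a b) x)
    (hf' : ContinuousOn f' (Icc a b)) :
    ∫ x in a..b, f' x = f b - f a :=
  integral_eq_sub_of_hasDerivAt_of_le hab (fun x hx => (hf x hx).continuousWithinAt)
    (fun x hx => (hf x (Ioo_subset_Icc_self hx)).hasDerivAt (Icc_mem_nhds hx.1 hx.2))
    (hf'.intervalIntegrable_of_Icc hab)

theorem integral_integral_eq_integral_sub_of_hasDerivWithinAt {u ut : ℝ → ℝ → E}
    {a b c d : ℝ} (hab : a ≤ b) (hcd : c ≤ d)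
    (hu : ∀ x ∈ Icc a b, ∀ t ∈ Icc c d,
      HasDerivWithinAt (fun t' => u x t') (ut x t) (Icc c d) t)
    (hut : ContinuousOn (fun p : ℝ × ℝ => ut p.1 p.2) (Icc a b ×ˢ Icc c d)) :
    ∫ t in c..d, ∫ x in a..b, ut x t = ∫ x in a..b, (u x d - u x c) := by
  have hint : IntegrableOn (Function.uncurry fun t x => ut x t) (uIoc c d ×ˢ uIoc a b) := by
    have hcont : ContinuousOn (Function.uncurry fun t x => ut x t) (Icc c d ×ˢ Icc a b) :=
      hut.comp continuous_swap.continuousOn fun p hp => ⟨hp.2, hp.1⟩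
    rw [uIoc_of_le hcd, uIoc_of_le hab]
    exact (hcont.integrableOn_compact (isCompact_Icc.prod isCompact_Icc)).mono_set
      (prod_mono Ioc_subset_Icc_self Ioc_subset_Icc_self)
  rw [intervalIntegral_intervalIntegral_swap hint]
  refine integral_congr fun x hx => ?_
  rw [uIcc_of_le hab] at hx
  exact integral_eq_sub_of_hasDerivWithinAt_Icc hcd (hu x hx) (hut.uncurry_left x hx)

end

namespace TearFilmSolution

variable {L T m n : ℝ} {Sbar : ℝ → ℝ} (sol : TearFilmSolution L T m n Sbar)

noncomputable def flux (x t : ℝ) : ℝ := sol.h x t ^ n * sol.hxxx x t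

noncomputable def fluxDeriv (x t : ℝ) : ℝ :=
  n * sol.h x t ^ (n - 1) * sol.hx x t * sol.hxxx x t + sol.h x t ^ n * sol.hxxxx x t

theorem ht_eq_neg_fluxDeriv_sub (x : ℝ) (hx : x ∈ Icc 0 L) (t : ℝ) (ht : t ∈ Icc 0 T) :
    sol.ht x t = -sol.fluxDeriv x t - sol.h x t ^ m * (Sbar x - sol.s x t) :=
  sol.pde_h x hx t ht

theorem hasDerivWithinAt_flux {t : ℝ} (ht : t ∈ Icc 0 T) {x : ℝ} (hx : x ∈ Icc 0 L) :
    HasDerivWithinAt (sol.flux · t) (sol.fluxDeriv x t) (Icc 0 L) x := by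
  have hpow : HasDerivWithinAt (fun x' => sol.h x' t ^ n)
      (sol.hx x t * n * sol.h x t ^ (n - 1)) (Icc 0 L) x :=
    (sol.hasDeriv_hx t ht x hx).rpow_const (Or.inl (sol.h_pos x hx t ht).ne')
  exact (hpow.mul (sol.hasDeriv_hxxxx t ht x hx)).congr_deriv (by unfold fluxDeriv; ring)

theorem continuousOn_fluxDeriv {t : ℝ} (ht : t ∈ Icc 0 T) :
    ContinuousOn (sol.fluxDeriv · t) (Icc 0 L) := by
  have hh := sol.cont_h.uncurry_right t ht
  have hpow (p : ℝ) : ContinuousOn (fun x => sol.h x t ^ p) (Icc 0 L) :=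
    hh.rpow_const fun x hx => Or.inl (sol.h_pos x hx t ht).ne'
  exact ((continuousOn_const.mul (hpow (n - 1))).mul (sol.cont_hx.uncurry_right t ht)
    |>.mul (sol.cont_hxxx.uncurry_right t ht)).add
    ((hpow n).mul (sol.cont_hxxxx.uncurry_right t ht))

theorem integral_fluxDeriv_eq_zero (hL : 0 ≤ L) {t : ℝ} (ht : t ∈ Icc 0 T) :
    ∫ x in (0:ℝ)..L, sol.fluxDeriv x t = 0 := by
  obtain ⟨-, -, hxxx_zero, hxxx_L, -, -⟩ := sol.bc t ht
  rw [integral_eq_sub_of_hasDerivWithinAt_Icc hL (fun x hx => sol.hasDerivWithinAt_flux ht hx)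
    (sol.continuousOn_fluxDeriv ht)]
  simp only [flux, hxxx_zero, hxxx_L, mul_zero, sub_zero]

theorem integral_loss_eq_neg_integral_ht (hL : 0 ≤ L) {t : ℝ} (ht : t ∈ Icc 0 T) :
    ∫ x in (0:ℝ)..L, sol.h x t ^ m * (Sbar x - sol.s x t) = -∫ x in (0:ℝ)..L, sol.ht x t := by
  have hloss : EqOn (fun x => sol.h x t ^ m * (Sbar x - sol.s x t))
      (fun x => -sol.ht x t - sol.fluxDeriv x t) (uIcc 0 L) := fun x hx => by
    rw [uIcc_of_le hL] at hx
    simp only [sol.ht_eq_neg_fluxDeriv_sub x hx t ht]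
    ring
  rw [integral_congr hloss,
    intervalIntegral.integral_sub _ ((sol.continuousOn_fluxDeriv ht).intervalIntegrable_of_Icc hL),
    sol.integral_fluxDeriv_eq_zero hL ht, intervalIntegral.integral_neg, sub_zero]
  exact ((sol.cont_ht.uncurry_right t ht).intervalIntegrable_of_Icc hL).neg

end TearFilmSolution

theorem total_nonconservative_loss_general
    (L T m n : ℝ) (hL : 0 < L) (hT : 0 < T)
    (Sbar : ℝ → ℝ)
    (sol : TearFilmSolution L T m n Sbar) :
    (∫ t in (0:ℝ)..T, ∫ x in (0:ℝ)..L, sol.h x t ^ m * (Sbar x - sol.s x t))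
        = (∫ x in (0:ℝ)..L, sol.h x 0) - ∫ x in (0:ℝ)..L, sol.h x T ∧
    (∫ t in (0:ℝ)..T, ∫ x in (0:ℝ)..L, sol.h x t ^ m * (Sbar x - sol.s x t))
        ≤ ∫ x in (0:ℝ)..L, sol.h x 0 := by
  have hsection (t : ℝ) (ht : t ∈ Icc 0 T) : IntervalIntegrable (sol.h · t) volume 0 L :=
    (sol.cont_h.uncurry_right t ht).intervalIntegrable_of_Icc hL.le
  have hmass : (∫ t in (0:ℝ)..T, ∫ x in (0:ℝ)..L, sol.h x t ^ m * (Sbar x - sol.s x t))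
      = (∫ x in (0:ℝ)..L, sol.h x 0) - ∫ x in (0:ℝ)..L, sol.h x T := by
    calc _ = ∫ t in (0:ℝ)..T, -∫ x in (0:ℝ)..L, sol.ht x t := integral_congr fun t ht =>
            sol.integral_loss_eq_neg_integral_ht hL.le (by rwa [uIcc_of_le hT.le] at ht)
      _ = -∫ x in (0:ℝ)..L, (sol.h x T - sol.h x 0) := by
        rw [intervalIntegral.integral_neg, integral_integral_eq_integral_sub_of_hasDerivWithinAt
          hL.le hT.le sol.hasDeriv_ht sol.cont_ht]
      _ = _ := by
        rw [intervalIntegral.integral_sub (hsection T ⟨hT.le, le_rfl⟩)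
          (hsection 0 ⟨le_rfl, hT.le⟩), neg_sub]
  have hmass_T_nonneg : 0 ≤ ∫ x in (0:ℝ)..L, sol.h x T :=
    integral_nonneg hL.le fun x hx => (sol.h_pos x hx T ⟨hT.le, le_rfl⟩).le
  exact ⟨hmass, hmass ▸ sub_le_self _ hmass_T_nonneg⟩

/-- The total non-conservative loss equals the loss of fluid mass and is bounded
above by the initial fluid mass. -/
theorem total_nonconservative_loss
    (L T m n : ℝ) (hL : 0 < L) (hT : 0 < T)
    (Sbar : ℝ → ℝ) (hSmeas : Measurable Sbar)
    (hSbdd : ∃ C : ℝ, ∀ x ∈ Icc (0:ℝ) L, |Sbar x| ≤ C)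
    (sol : TearFilmSolution L T m n Sbar) :
    (∫ t in (0:ℝ)..T, ∫ x in (0:ℝ)..L, sol.h x t ^ m * (Sbar x - sol.s x t))
        = (∫ x in (0:ℝ)..L, sol.h x 0) - ∫ x in (0:ℝ)..L, sol.h x T ∧
    (∫ t in (0:ℝ)..T, ∫ x in (0:ℝ)..L, sol.h x t ^ m * (Sbar x - sol.s x t))
        ≤ ∫ x in (0:ℝ)..L, sol.h x 0 :=
  total_nonconservative_loss_general L T m n hL hT Sbar sol
end

section
/- Let L, T > 0, let m ≥ 1 and n be real numbers, let S̄ : [0,L] → ℝ be continuous, and let (h,s) be a classical solution of the tear-film system with exponents (m,n) on [0,L]×[0,T]. Suppose λ > 0 satisfies λ ≤ S̄(x) for all x ∈ [0,L], and that the initial datum satisfies λ ≤ s(x,0) ≤ sup_{[0,L]} S̄ for all x ∈ [0,L]. Then the weak maximum principle holds for the osmolarity: λ ≤ s(x,t) ≤ sup_{[0,L]} S̄ for all (x,t) ∈ [0,L]×[0,T]. -/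
/-!
Both bounds are instances of one weak maximum principle for the Neumann problem: if `w ≤ 0`
initially and `w_t ≤ w_xx + K w` wherever `w > 0` and `w_x = 0`, then `w ≤ 0`. Indeed, at a
positive maximum of `e^{-(K+1)t} w` over the rectangle one has `t > 0`, `w_x = 0`, `w_xx ≤ 0` and
`w_t ≥ (K+1) w > K w`. Where `s_x = 0` the drift term of the osmolarity equation drops out, leaving
`s_t = s_xx + s (S̄ - s) h^{m-1}`. For the upper bound take `w = s - sup S̄` and `K = 0`. For the
lower bound take `w = λ - s`: since `-s (S̄ - s) = (λ - s)(S̄ - s - λ) - λ (S̄ - λ)`, the reaction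
term is at most `K w` for any upper bound `K` of `(S̄ - s - λ) h^{m-1}` on the compact rectangle.
-/

open Set MeasureTheory intervalIntegral Filter

open Set MeasureTheory

open Topology Real

theorem IsMaxOn.sub_mul_nonpos_of_hasDerivWithinAt {f : ℝ → ℝ} {s : Set ℝ} {a d y : ℝ}
    (hs : Convex ℝ s) (hmax : IsMaxOn f s a) (hf : HasDerivWithinAt f d s a)
    (ha : a ∈ s) (hy : y ∈ s) : (y - a) * d ≤ 0 := by
  simpa using hmax.localize.hasFDerivWithinAt_nonpos hf.hasFDerivWithinAt
    (sub_mem_posTangentConeAt_of_segment_subset (hs.segment_subset ha hy))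

theorem IsMinOn.sub_mul_nonneg_of_hasDerivWithinAt {f : ℝ → ℝ} {s : Set ℝ} {a d y : ℝ}
    (hs : Convex ℝ s) (hmin : IsMinOn f s a) (hf : HasDerivWithinAt f d s a)
    (ha : a ∈ s) (hy : y ∈ s) : 0 ≤ (y - a) * d := by
  simpa using hmin.localize.hasFDerivWithinAt_nonneg hf.hasFDerivWithinAt
    (sub_mem_posTangentConeAt_of_segment_subset (hs.segment_subset ha hy))

theorem IsMaxOn.nonpos_of_hasDerivWithinAt_of_eq_zero {f f' : ℝ → ℝ} {s : Set ℝ} {a d : ℝ}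
    (hs : Convex ℝ s) (ha : a ∈ s) (hacc : AccPt a (𝓟 s)) (hmax : IsMaxOn f s a)
    (hf : ∀ x ∈ s, HasDerivWithinAt f (f' x) s x) (hf'a : f' a = 0)
    (hf' : HasDerivWithinAt f' d s a) : d ≤ 0 := by
  by_contra! hd
  have hsign : ∀ᶠ x in 𝓝 a, x ∈ s \ {a} → 0 < slope f' a x :=
    eventually_nhdsWithin_iff.mp
      ((hasDerivWithinAt_iff_tendsto_slope.mp hf').eventually (eventually_gt_nhds hd))
  obtain ⟨ε, hε, hball⟩ := Metric.eventually_nhds_iff_ball.mp hsign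
  obtain ⟨y, ⟨hyε, hys⟩, hya⟩ := accPt_iff_nhds.mp hacc _ (Metric.ball_mem_nhds a hε)
  have hJ : uIcc a y ⊆ s ∩ Metric.ball a ε := by
    rw [← segment_eq_uIcc]
    exact (hs.inter (convex_ball a ε)).segment_subset ⟨ha, Metric.mem_ball_self hε⟩ ⟨hys, hyε⟩
  have hJs : uIcc a y ⊆ s := hJ.trans inter_subset_left
  have hgrow : ∀ z ∈ uIcc a y, z ≠ a → 0 < (z - a) * f' z := by
    intro z hz hza
    have hslope := hball z (hJ hz).2 ⟨hJs hz, hza⟩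
    rw [slope_def_field, hf'a, sub_zero] at hslope
    have hza' : z - a ≠ 0 := sub_ne_zero.mpr hza
    calc 0 < f' z / (z - a) * (z - a) ^ 2 := mul_pos hslope (pow_two_pos_of_ne_zero hza')
      _ = (z - a) * f' z := by field_simp
  obtain ⟨z₀, hz₀, hmin₀⟩ := isCompact_uIcc.exists_isMinOn nonempty_uIcc
    (fun x hx => ((hf x (hJs hx)).continuousWithinAt).mono hJs)
  -- as `f y ≤ f a`, some minimizer of `f` on `[a, y]` differs from `a`, against `hgrow`
  obtain ⟨z, hz, hza, hmin⟩ : ∃ z ∈ uIcc a y, z ≠ a ∧ IsMinOn f (uIcc a y) z := by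
    by_cases hz₀a : z₀ = a
    · refine ⟨y, right_mem_uIcc, hya, fun u hu => ?_⟩
      calc f y ≤ f a := hmax hys
        _ = f z₀ := by rw [hz₀a]
        _ ≤ f u := hmin₀ hu
    · exact ⟨z₀, hz₀, hz₀a, hmin₀⟩
  have hfirst := hmin.sub_mul_nonneg_of_hasDerivWithinAt (convex_uIcc a y)
    ((hf z (hJs hz)).mono hJs) hz left_mem_uIcc
  nlinarith [hgrow z hz hza]

theorem IsMaxOn.eq_zero_of_hasDerivWithinAt_Icc {f f' : ℝ → ℝ} {L a : ℝ}
    (hmax : IsMaxOn f (Icc 0 L) a) (ha : a ∈ Icc 0 L)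
    (hf : HasDerivWithinAt f (f' a) (Icc 0 L) a) (h0 : f' 0 = 0) (hL : f' L = 0) :
    f' a = 0 := by
  rcases ha.1.eq_or_lt with rfl | h0a
  · exact h0
  rcases ha.2.eq_or_lt with rfl | haL
  · exact hL
  have hleft := hmax.sub_mul_nonpos_of_hasDerivWithinAt (convex_Icc 0 L) hf ha
    (left_mem_Icc.2 (h0a.trans haL).le)
  have hright := hmax.sub_mul_nonpos_of_hasDerivWithinAt (convex_Icc 0 L) hf ha
    (right_mem_Icc.2 (h0a.trans haL).le)
  nlinarith

theorem nonpos_of_parabolic_neumann_subsolution {L T K : ℝ} (hL : 0 < L)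
    {w wx wxx wt : ℝ → ℝ → ℝ}
    (hw : ContinuousOn (fun p : ℝ × ℝ => w p.1 p.2) (Icc 0 L ×ˢ Icc 0 T))
    (hwx : ∀ t ∈ Icc 0 T, ∀ x ∈ Icc 0 L, HasDerivWithinAt (w · t) (wx x t) (Icc 0 L) x)
    (hwxx : ∀ t ∈ Icc 0 T, ∀ x ∈ Icc 0 L, HasDerivWithinAt (wx · t) (wxx x t) (Icc 0 L) x)
    (hwt : ∀ x ∈ Icc 0 L, ∀ t ∈ Icc 0 T, HasDerivWithinAt (w x) (wt x t) (Icc 0 T) t)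
    (hbc : ∀ t ∈ Icc 0 T, wx 0 t = 0 ∧ wx L t = 0)
    (hinit : ∀ x ∈ Icc 0 L, w x 0 ≤ 0)
    (hsub : ∀ x ∈ Icc 0 L, ∀ t ∈ Ioc 0 T, 0 < w x t → wx x t = 0 →
      wt x t ≤ wxx x t + K * w x t) :
    ∀ x ∈ Icc 0 L, ∀ t ∈ Icc 0 T, w x t ≤ 0 := by
  intro x₁ hx₁ t₁ ht₁
  by_contra! hpos₁
  have hv : ContinuousOn (fun p : ℝ × ℝ => exp (-(K + 1) * p.2) * w p.1 p.2)
      (Icc 0 L ×ˢ Icc 0 T) :=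
    (continuous_const.mul continuous_snd).rexp.continuousOn.mul hw
  obtain ⟨⟨x₀, t₀⟩, ⟨hx₀, ht₀⟩, hmax⟩ :=
    (isCompact_Icc.prod isCompact_Icc).exists_isMaxOn ⟨(x₁, t₁), hx₁, ht₁⟩ hv
  have hpos₀ : 0 < w x₀ t₀ := by
    have h := hmax (mk_mem_prod hx₁ ht₁)
    have : 0 < exp (-(K + 1) * t₀) * w x₀ t₀ := (mul_pos (exp_pos _) hpos₁).trans_le h
    exact (mul_pos_iff_of_pos_left (exp_pos _)).mp this
  have ht₀pos : 0 < t₀ := by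
    refine ht₀.1.lt_of_ne fun h => ?_
    subst h
    linarith [hinit x₀ hx₀]
  have hmaxx : IsMaxOn (w · t₀) (Icc 0 L) x₀ := fun x hx =>
    le_of_mul_le_mul_left (hmax (mk_mem_prod hx ht₀)) (exp_pos _)
  have hwx₀ : wx x₀ t₀ = 0 :=
    hmaxx.eq_zero_of_hasDerivWithinAt_Icc (f' := (wx · t₀)) hx₀ (hwx t₀ ht₀ x₀ hx₀)
      (hbc t₀ ht₀).1 (hbc t₀ ht₀).2
  have hwxx₀ : wxx x₀ t₀ ≤ 0 :=
    hmaxx.nonpos_of_hasDerivWithinAt_of_eq_zero (convex_Icc 0 L) hx₀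
      (uniqueDiffOn_Icc hL x₀ hx₀).accPt (hwx t₀ ht₀) hwx₀ (hwxx t₀ ht₀ x₀ hx₀)
  have hmaxt : IsMaxOn (fun t => exp (-(K + 1) * t) * w x₀ t) (Icc 0 T) t₀ := fun t ht =>
    hmax (mk_mem_prod hx₀ ht)
  have hderiv : HasDerivWithinAt (fun t => exp (-(K + 1) * t) * w x₀ t)
      (exp (-(K + 1) * t₀) * (wt x₀ t₀ - (K + 1) * w x₀ t₀)) (Icc 0 T) t₀ :=
    (((hasDerivAt_id' t₀).const_mul (-(K + 1))).exp.hasDerivWithinAt.mul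
      (hwt x₀ hx₀ t₀ ht₀)).congr_deriv (by ring)
  have htime : 0 ≤ exp (-(K + 1) * t₀) * (wt x₀ t₀ - (K + 1) * w x₀ t₀) := by
    have h := hmaxt.sub_mul_nonpos_of_hasDerivWithinAt (convex_Icc 0 T) hderiv ht₀
      (left_mem_Icc.2 (ht₀.1.trans ht₀.2))
    nlinarith
  have hwt₀ := (mul_nonneg_iff_of_pos_left (exp_pos _)).mp htime
  linarith [hsub x₀ hx₀ t₀ ⟨ht₀pos, ht₀.2⟩ hpos₀ hwx₀]

namespace TearFilmSolution

variable {L T m n : ℝ} {Sbar : ℝ → ℝ} (sol : TearFilmSolution L T m n Sbar)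

theorem st_eq_of_sx_eq_zero {x t : ℝ} (hx : x ∈ Icc 0 L) (ht : t ∈ Icc 0 T)
    (hsx : sol.sx x t = 0) :
    sol.st x t = sol.sxx x t + sol.s x t * (Sbar x - sol.s x t) * sol.h x t ^ (m - 1) := by
  rw [sol.pde_s x hx t ht, hsx, mul_zero, add_zero]

theorem s_le_of_le (hL : 0 < L) {M : ℝ} (hM : 0 ≤ M) (hSbar : ∀ x ∈ Icc 0 L, Sbar x ≤ M)
    (hinit : ∀ x ∈ Icc 0 L, sol.s x 0 ≤ M) :
    ∀ x ∈ Icc 0 L, ∀ t ∈ Icc 0 T, sol.s x t ≤ M := by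
  have hw := nonpos_of_parabolic_neumann_subsolution (K := 0) hL
    (w := fun x t => sol.s x t - M) (sol.cont_s.sub continuousOn_const)
    (fun t ht x hx => (sol.hasDeriv_sx t ht x hx).sub_const M) sol.hasDeriv_sxx
    (fun x hx t ht => (sol.hasDeriv_st x hx t ht).sub_const M)
    (fun t ht => ⟨(sol.bc t ht).2.2.2.2.1, (sol.bc t ht).2.2.2.2.2⟩)
    (fun x hx => sub_nonpos.2 (hinit x hx)) fun x hx t ht hpos hsx => by
      have ht' := Ioc_subset_Icc_self ht
      have hreact : sol.s x t * (Sbar x - sol.s x t) * sol.h x t ^ (m - 1) ≤ 0 :=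
        mul_nonpos_of_nonpos_of_nonneg
          (mul_nonpos_of_nonneg_of_nonpos (by linarith) (by linarith [hSbar x hx]))
          (rpow_nonneg (sol.h_pos x hx t ht').le _)
      linarith [sol.st_eq_of_sx_eq_zero hx ht' hsx]
  exact fun x hx t ht => sub_nonpos.1 (hw x hx t ht)

theorem le_s_of_le (hL : 0 < L) (hSbar : ContinuousOn Sbar (Icc 0 L)) {lam : ℝ} (hlam : 0 ≤ lam)
    (hlamS : ∀ x ∈ Icc 0 L, lam ≤ Sbar x) (hinit : ∀ x ∈ Icc 0 L, lam ≤ sol.s x 0) :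
    ∀ x ∈ Icc 0 L, ∀ t ∈ Icc 0 T, lam ≤ sol.s x t := by
  obtain ⟨K, hK⟩ : BddAbove ((fun p : ℝ × ℝ =>
      (Sbar p.1 - sol.s p.1 p.2 - lam) * sol.h p.1 p.2 ^ (m - 1)) '' (Icc 0 L ×ˢ Icc 0 T)) :=
    (isCompact_Icc.prod isCompact_Icc).bddAbove_image
      ((((hSbar.comp continuousOn_fst fun _ hp => hp.1).sub sol.cont_s).sub
        continuousOn_const).mul
      (sol.cont_h.rpow_const fun p hp => Or.inl (sol.h_pos _ hp.1 _ hp.2).ne'))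
  have hw := nonpos_of_parabolic_neumann_subsolution (K := K) hL
    (w := fun x t => lam - sol.s x t) (wx := fun x t => -sol.sx x t)
    (wxx := fun x t => -sol.sxx x t) (wt := fun x t => -sol.st x t)
    (continuousOn_const.sub sol.cont_s)
    (fun t ht x hx => (sol.hasDeriv_sx t ht x hx).const_sub lam)
    (fun t ht x hx => (sol.hasDeriv_sxx t ht x hx).neg)
    (fun x hx t ht => (sol.hasDeriv_st x hx t ht).const_sub lam)
    (fun t ht => by simp [(sol.bc t ht).2.2.2.2.1, (sol.bc t ht).2.2.2.2.2])
    (fun x hx => sub_nonpos.2 (hinit x hx)) fun x hx t ht hpos hsx => by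
      have ht' := Ioc_subset_Icc_self ht
      have hK' := hK ⟨(x, t), mk_mem_prod hx ht', rfl⟩
      have hpow := rpow_pos_of_pos (sol.h_pos x hx t ht') (m - 1)
      have hreact : -(sol.s x t * (Sbar x - sol.s x t) * sol.h x t ^ (m - 1)) ≤
          K * (lam - sol.s x t) := by
        nlinarith [mul_le_mul_of_nonneg_left hK' hpos.le,
          mul_nonneg (mul_nonneg hlam (sub_nonneg.2 (hlamS x hx))) hpow.le]
      linarith [sol.st_eq_of_sx_eq_zero hx ht' (neg_eq_zero.mp hsx)]
  exact fun x hx t ht => sub_nonpos.1 (hw x hx t ht)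

end TearFilmSolution

theorem osmolarity_maximum_principle_general
    (L T m n : ℝ) (hL : 0 < L)
    (Sbar : ℝ → ℝ) (hScont : ContinuousOn Sbar (Icc (0:ℝ) L))
    (sol : TearFilmSolution L T m n Sbar)
    (lam : ℝ) (hlam : 0 < lam)
    (hlamS : ∀ x ∈ Icc (0:ℝ) L, lam ≤ Sbar x)
    (hs0 : ∀ x ∈ Icc (0:ℝ) L,
      lam ≤ sol.s x 0 ∧ sol.s x 0 ≤ sSup (Sbar '' Icc (0:ℝ) L)) :
    ∀ x ∈ Icc (0:ℝ) L, ∀ t ∈ Icc (0:ℝ) T,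
      lam ≤ sol.s x t ∧ sol.s x t ≤ sSup (Sbar '' Icc (0:ℝ) L) := by
  have hSbar_le : ∀ x ∈ Icc (0:ℝ) L, Sbar x ≤ sSup (Sbar '' Icc (0:ℝ) L) := fun x hx =>
    le_csSup (isCompact_Icc.bddAbove_image hScont) (mem_image_of_mem _ hx)
  have hM : 0 ≤ sSup (Sbar '' Icc (0:ℝ) L) :=
    hlam.le.trans ((hlamS 0 (left_mem_Icc.2 hL.le)).trans (hSbar_le 0 (left_mem_Icc.2 hL.le)))
  intro x hx t ht
  exact ⟨sol.le_s_of_le hL hScont hlam.le hlamS (fun y hy => (hs0 y hy).1) x hx t ht,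
    sol.s_le_of_le hL hM hSbar_le (fun y hy => (hs0 y hy).2) x hx t ht⟩

/-- Weak maximum principle for the osmolarity: `λ ≤ s ≤ sup S̄`. -/
theorem osmolarity_maximum_principle
    (L T m n : ℝ) (hL : 0 < L) (hT : 0 < T) (hm : 1 ≤ m)
    (Sbar : ℝ → ℝ) (hScont : ContinuousOn Sbar (Icc (0:ℝ) L))
    (sol : TearFilmSolution L T m n Sbar)
    (lam : ℝ) (hlam : 0 < lam)
    (hlamS : ∀ x ∈ Icc (0:ℝ) L, lam ≤ Sbar x)
    (hs0 : ∀ x ∈ Icc (0:ℝ) L,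
      lam ≤ sol.s x 0 ∧ sol.s x 0 ≤ sSup (Sbar '' Icc (0:ℝ) L)) :
    ∀ x ∈ Icc (0:ℝ) L, ∀ t ∈ Icc (0:ℝ) T,
      lam ≤ sol.s x t ∧ sol.s x t ≤ sSup (Sbar '' Icc (0:ℝ) L) :=
  osmolarity_maximum_principle_general L T m n hL Sbar hScont sol lam hlam hlamS hs0
end

section
/- Let L, T > 0, let m > 1, let S̄ : [0,L] → ℝ be bounded and measurable, and let (h,s) be a classical solution of the tear-film system with exponents (m, m+1) on [0,L]×[0,T]. Then for every t ∈ [0,T], the functional ∫₀^L h(x,t)^{1−m} dx is differentiable in t and satisfies the identity d/dt ∫₀^L h^{1−m} dx = (m−1) ∫₀^L (S̄(x) − s(x,t)) dx − m(m−1) ∫₀^L h_{xx}(x,t)² dx. -/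
open Set MeasureTheory intervalIntegral Filter

open Set MeasureTheory

/-!
Differentiating under the integral sign (legitimate since `h_t` is continuous on the compact
rectangle and `h > 0`), `d/dt ∫ h^{1-m} = (1-m) ∫ h^{-m} h_t`. For `n = m + 1` the equation for
`h` turns `(1-m) h^{-m} h_t` into `(m-1) (S̄ - s + (m+1) h_x h_xxx + h h_xxxx)`, and the
boundary conditions `h_x = h_xxx = 0` let two integrations by parts replace `∫ h_x h_xxx` by
`-∫ h_xx²` and `∫ h h_xxxx` by `∫ h_xx²`.
-/

theorem Convex.norm_sub_sub_smul_le_of_hasDerivWithinAt {E : Type*} [NormedAddCommGroup E]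
    [NormedSpace ℝ E] {f f' : ℝ → E} {s : Set ℝ} {C t t' : ℝ} (hs : Convex ℝ s)
    (hf : ∀ τ ∈ s, HasDerivWithinAt f (f' τ) s τ) (bound : ∀ τ ∈ s, ‖f' τ - f' t‖ ≤ C)
    (ht : t ∈ s) (ht' : t' ∈ s) :
    ‖f t' - f t - (t' - t) • f' t‖ ≤ C * ‖t' - t‖ := by
  have hg : ∀ τ ∈ s, HasDerivWithinAt (fun τ => f τ - τ • f' t) (f' τ - f' t) s τ := by
    intro τ hτ
    simpa using (hf τ hτ).fun_sub ((hasDerivWithinAt_id τ s).smul_const (f' t))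
  have := hs.norm_image_sub_le_of_norm_hasDerivWithin_le hg bound ht ht'
  rwa [show f t' - t' • f' t - (f t - t • f' t) = f t' - f t - (t' - t) • f' t by
    rw [sub_smul]; abel] at this

open Function in
theorem hasDerivWithinAt_intervalIntegral_of_continuousOn_prod {E : Type*}
    [NormedAddCommGroup E] [NormedSpace ℝ E] [CompleteSpace E] {a b t : ℝ} {s : Set ℝ}
    {g g' : ℝ → ℝ → E} (hab : a ≤ b) (hs : Convex ℝ s) (hs' : IsCompact s)
    (hg : ContinuousOn (uncurry g) (Icc a b ×ˢ s))
    (hg' : ContinuousOn (uncurry g') (Icc a b ×ˢ s))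
    (hderiv : ∀ x ∈ Icc a b, ∀ τ ∈ s, HasDerivWithinAt (g x) (g' x τ) s τ) (ht : t ∈ s) :
    HasDerivWithinAt (fun τ => ∫ x in a..b, g x τ) (∫ x in a..b, g' x t) s t := by
  rw [hasDerivWithinAt_iff_isLittleO, Asymptotics.isLittleO_iff]
  intro c hc
  set ε := c / (b - a + 1)
  have hε : 0 < ε := div_pos hc (by linarith)
  obtain ⟨δ, hδ, hunif⟩ := Metric.uniformContinuousOn_iff.mp
    ((isCompact_Icc.prod hs').uniformContinuousOn_of_continuous hg') ε hε
  filter_upwards [inter_mem_nhdsWithin s (Metric.ball_mem_nhds t hδ)] with t' ht'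
  have hpointwise : ∀ x ∈ Icc a b, ‖g x t' - g x t - (t' - t) • g' x t‖ ≤ ε * ‖t' - t‖ := by
    refine fun x hx => (hs.inter (convex_ball t δ)).norm_sub_sub_smul_le_of_hasDerivWithinAt
      (fun τ hτ => (hderiv x hx τ hτ.1).mono inter_subset_left) (fun τ hτ => ?_)
      ⟨ht, Metric.mem_ball_self hδ⟩ ht'
    rw [← dist_eq_norm]
    refine (hunif (x, τ) ⟨hx, hτ.1⟩ (x, t) ⟨hx, ht⟩ ?_).le
    simpa [Prod.dist_eq, hδ] using hτ.2
  have hint : ∀ τ ∈ s, IntervalIntegrable (g · τ) volume a b := fun τ hτ =>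
    (hg.uncurry_right τ hτ).intervalIntegrable_of_Icc hab
  have hint' : IntervalIntegrable (fun x => (t' - t) • g' x t) volume a b :=
    ((hg'.uncurry_right t ht).intervalIntegrable_of_Icc hab).smul (t' - t)
  rw [← intervalIntegral.integral_smul, ← intervalIntegral.integral_sub (hint t' ht'.1) (hint t ht),
    ← intervalIntegral.integral_sub ((hint t' ht'.1).sub (hint t ht)) hint']
  calc ‖∫ x in a..b, (g x t' - g x t - (t' - t) • g' x t)‖
      ≤ ε * ‖t' - t‖ * |b - a| := by
        refine intervalIntegral.norm_integral_le_of_norm_le_const fun x hx => hpointwise x ?_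
        rw [uIoc_of_le hab] at hx
        exact Ioc_subset_Icc_self hx
    _ ≤ c * ‖t' - t‖ := by
        rw [abs_of_nonneg (sub_nonneg.mpr hab), mul_right_comm]
        refine mul_le_mul_of_nonneg_right ?_ (norm_nonneg _)
        rw [div_mul_eq_mul_div, div_le_iff₀ (by linarith)]
        nlinarith

namespace TearFilmSolution

variable {L T m n : ℝ} {Sbar : ℝ → ℝ} (sol : TearFilmSolution L T m n Sbar)

theorem hasDerivWithinAt_integral_rpow (hL : 0 ≤ L) (p : ℝ) {t : ℝ} (ht : t ∈ Icc 0 T) :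
    HasDerivWithinAt (fun t' => ∫ x in (0:ℝ)..L, sol.h x t' ^ p)
      (∫ x in (0:ℝ)..L, sol.ht x t * p * sol.h x t ^ (p - 1)) (Icc 0 T) t := by
  have hne : ∀ q : ℝ, ∀ z ∈ Icc 0 L ×ˢ Icc 0 T, sol.h z.1 z.2 ≠ 0 ∨ 0 ≤ q :=
    fun _ z hz => Or.inl (sol.h_pos z.1 hz.1 z.2 hz.2).ne'
  exact hasDerivWithinAt_intervalIntegral_of_continuousOn_prod (g := fun x τ => sol.h x τ ^ p)
    (g' := fun x τ => sol.ht x τ * p * sol.h x τ ^ (p - 1)) hL (convex_Icc 0 T) isCompact_Icc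
    (sol.cont_h.rpow_const (hne p))
    ((sol.cont_ht.mul continuousOn_const).mul (sol.cont_h.rpow_const (hne (p - 1))))
    (fun x hx τ hτ => (sol.hasDeriv_ht x hx τ hτ).rpow_const (Or.inl (sol.h_pos x hx τ hτ).ne'))
    ht

theorem integral_hx_mul_hxxx (hL : 0 ≤ L) {t : ℝ} (ht : t ∈ Icc 0 T) :
    ∫ x in (0:ℝ)..L, sol.hx x t * sol.hxxx x t = -∫ x in (0:ℝ)..L, sol.hxx x t ^ 2 := by
  obtain ⟨hx0, hxL, -⟩ := sol.bc t ht
  rw [intervalIntegral.integral_mul_deriv_eq_deriv_mul_of_hasDerivWithinAt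
    (by rw [uIcc_of_le hL]; exact sol.hasDeriv_hxx t ht)
    (by rw [uIcc_of_le hL]; exact sol.hasDeriv_hxxx t ht)
    ((sol.cont_hxx.uncurry_right t ht).intervalIntegrable_of_Icc hL)
    ((sol.cont_hxxx.uncurry_right t ht).intervalIntegrable_of_Icc hL), hx0, hxL]
  simp [sq]

theorem integral_h_mul_hxxxx (hL : 0 ≤ L) {t : ℝ} (ht : t ∈ Icc 0 T) :
    ∫ x in (0:ℝ)..L, sol.h x t * sol.hxxxx x t = ∫ x in (0:ℝ)..L, sol.hxx x t ^ 2 := by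
  obtain ⟨-, -, hxxx0, hxxxL, -⟩ := sol.bc t ht
  rw [intervalIntegral.integral_mul_deriv_eq_deriv_mul_of_hasDerivWithinAt
    (by rw [uIcc_of_le hL]; exact sol.hasDeriv_hx t ht)
    (by rw [uIcc_of_le hL]; exact sol.hasDeriv_hxxxx t ht)
    ((sol.cont_hx.uncurry_right t ht).intervalIntegrable_of_Icc hL)
    ((sol.cont_hxxxx.uncurry_right t ht).intervalIntegrable_of_Icc hL), hxxx0, hxxxL,
    sol.integral_hx_mul_hxxx hL ht]
  simp

/-- The equation for `h` expresses `S̄ - s` through `h` and its derivatives. -/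
theorem continuousOn_Sbar_sub_s {t : ℝ} (ht : t ∈ Icc 0 T) :
    ContinuousOn (fun x => Sbar x - sol.s x t) (Icc 0 L) := by
  have hne : ∀ q : ℝ, ∀ x ∈ Icc 0 L, sol.h x t ≠ 0 ∨ 0 ≤ q :=
    fun _ x hx => Or.inl (sol.h_pos x hx t ht).ne'
  refine ContinuousOn.congr (f := fun x => -(sol.ht x t
      + n * sol.h x t ^ (n - 1) * sol.hx x t * sol.hxxx x t + sol.h x t ^ n * sol.hxxxx x t)
      / sol.h x t ^ m) ?_ fun x hx => ?_
  · have hpow : ∀ q : ℝ, ContinuousOn (sol.h · t ^ q) (Icc 0 L) := fun q =>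
      (sol.cont_h.uncurry_right t ht).rpow_const (hne q)
    exact ((((sol.cont_ht.uncurry_right t ht).add (((continuousOn_const.mul (hpow _)).mul
      (sol.cont_hx.uncurry_right t ht)).mul (sol.cont_hxxx.uncurry_right t ht))).add
      ((hpow n).mul (sol.cont_hxxxx.uncurry_right t ht))).neg).div (hpow m)
      fun x hx => (Real.rpow_pos_of_pos (sol.h_pos x hx t ht) m).ne'
  · have hpos := sol.h_pos x hx t ht
    rw [eq_div_iff (Real.rpow_pos_of_pos hpos m).ne', sol.pde_h x hx t ht]
    ring

theorem ht_mul_rpow_eq (hn : n = m + 1) {x t : ℝ} (hx : x ∈ Icc 0 L) (ht : t ∈ Icc 0 T) :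
    sol.ht x t * (1 - m) * sol.h x t ^ (1 - m - 1) = (m - 1) * ((Sbar x - sol.s x t)
      + (m + 1) * (sol.hx x t * sol.hxxx x t) + sol.h x t * sol.hxxxx x t) := by
  subst hn
  have hpos := sol.h_pos x hx t ht
  have hcancel : sol.h x t ^ m * sol.h x t ^ (1 - m - 1) = 1 := by
    rw [← Real.rpow_add hpos]; norm_num
  have hcancel' : sol.h x t ^ (m + 1) * sol.h x t ^ (1 - m - 1) = sol.h x t := by
    rw [← Real.rpow_add hpos]; norm_num
  rw [sol.pde_h x hx t ht, add_sub_cancel_right]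
  linear_combination ((1 - m) * (-(m + 1) * sol.hx x t * sol.hxxx x t
    - (Sbar x - sol.s x t))) * hcancel + ((1 - m) * (-sol.hxxxx x t)) * hcancel'

end TearFilmSolution

theorem entropy_identity_general
    (L T m : ℝ) (hL : 0 < L)
    (Sbar : ℝ → ℝ)
    (sol : TearFilmSolution L T m (m + 1) Sbar) :
    ∀ t ∈ Icc (0:ℝ) T,
      HasDerivWithinAt (fun t' => ∫ x in (0:ℝ)..L, sol.h x t' ^ (1 - m))
        ((m - 1) * (∫ x in (0:ℝ)..L, (Sbar x - sol.s x t))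
          - m * (m - 1) * ∫ x in (0:ℝ)..L, (sol.hxx x t) ^ 2)
        (Icc (0:ℝ) T) t := by
  intro t ht
  have iS : IntervalIntegrable (fun x => Sbar x - sol.s x t) volume 0 L :=
    (sol.continuousOn_Sbar_sub_s ht).intervalIntegrable_of_Icc hL.le
  have i1 : IntervalIntegrable (fun x => (m + 1) * (sol.hx x t * sol.hxxx x t)) volume 0 L :=
    (((sol.cont_hx.uncurry_right t ht).mul
      (sol.cont_hxxx.uncurry_right t ht)).intervalIntegrable_of_Icc hL.le).const_mul _
  have i2 : IntervalIntegrable (fun x => sol.h x t * sol.hxxxx x t) volume 0 L :=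
    ((sol.cont_h.uncurry_right t ht).mul
      (sol.cont_hxxxx.uncurry_right t ht)).intervalIntegrable_of_Icc hL.le
  convert sol.hasDerivWithinAt_integral_rpow hL.le (1 - m) ht using 1
  rw [intervalIntegral.integral_congr fun x hx =>
      sol.ht_mul_rpow_eq rfl (uIcc_of_le hL.le ▸ hx) ht,
    intervalIntegral.integral_const_mul, intervalIntegral.integral_add (iS.add i1) i2,
    intervalIntegral.integral_add iS i1, intervalIntegral.integral_const_mul,
    sol.integral_hx_mul_hxxx hL.le ht, sol.integral_h_mul_hxxxx hL.le ht]
  ring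

/-- Entropy-type identity for the case `n = m + 1`:
`d/dt ∫₀^L h^{1−m} dx = (m−1)∫₀^L (S̄ − s) dx − m(m−1)∫₀^L h_{xx}² dx`. -/
theorem entropy_identity
    (L T m : ℝ) (hL : 0 < L) (hT : 0 < T) (hm : 1 < m)
    (Sbar : ℝ → ℝ) (hSmeas : Measurable Sbar)
    (hSbdd : ∃ C : ℝ, ∀ x ∈ Icc (0:ℝ) L, |Sbar x| ≤ C)
    (sol : TearFilmSolution L T m (m + 1) Sbar) :
    ∀ t ∈ Icc (0:ℝ) T,
      HasDerivWithinAt (fun t' => ∫ x in (0:ℝ)..L, sol.h x t' ^ (1 - m))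
        ((m - 1) * (∫ x in (0:ℝ)..L, (Sbar x - sol.s x t))
          - m * (m - 1) * ∫ x in (0:ℝ)..L, (sol.hxx x t) ^ 2)
        (Icc (0:ℝ) T) t :=
  entropy_identity_general L T m hL Sbar sol
end

section
/- Let L, T > 0, let m > 1, let S̄ : [0,L] → ℝ be bounded and measurable, and let (h,s) be a classical solution of the tear-film system with exponents (m, m+1) on [0,L]×[0,T]. Assume in addition that h(x,0) ≥ η > 0 for all x and that 0 ≤ s(x,t) for all (x,t). Then, with ‖S̄‖_∞ denoting the essential supremum of |S̄|, the following a-priori bounds hold: m(m−1) ∫₀^T ∫₀^L h_{xx}(x,t)² dx dt ≤ L η^{1−m} + (m−1) ‖S̄‖_∞ L T, and for every t ∈ [0,T], ∫₀^L h(x,t)^{1−m} dx ≤ L η^{1−m} + (m−1) ‖S̄‖_∞ L T. -/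
open Set MeasureTheory intervalIntegral Filter

open Set MeasureTheory

private lemma contOn_left {F : ℝ → ℝ → ℝ} {A B : Set ℝ}
    (hF : ContinuousOn (fun p : ℝ × ℝ => F p.1 p.2) (A ×ˢ B)) {t : ℝ} (ht : t ∈ B) :
    ContinuousOn (fun x => F x t) A :=
  hF.comp (Continuous.continuousOn (continuous_id.prodMk continuous_const))
    (fun x hx => ⟨hx, ht⟩)

private lemma contOn_right {F : ℝ → ℝ → ℝ} {A B : Set ℝ}
    (hF : ContinuousOn (fun p : ℝ × ℝ => F p.1 p.2) (A ×ˢ B)) {x : ℝ} (hx : x ∈ A) :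
    ContinuousOn (fun t => F x t) B :=
  hF.comp (Continuous.continuousOn (continuous_const.prodMk continuous_id))
    (fun t ht => ⟨hx, ht⟩)

private lemma integrable_prod_aux {F : ℝ → ℝ → ℝ} {L T : ℝ}
    (hF : ContinuousOn (fun p : ℝ × ℝ => F p.1 p.2) (Icc 0 L ×ˢ Icc 0 T)) :
    Integrable (Function.uncurry F)
      ((volume.restrict (Ioc (0:ℝ) L)).prod (volume.restrict (Ioc (0:ℝ) T))) := by
  rw [Measure.prod_restrict]
  have h1 : IntegrableOn (fun p : ℝ × ℝ => F p.1 p.2) (Icc 0 L ×ˢ Icc 0 T) volume :=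
    hF.integrableOn_compact (isCompact_Icc.prod isCompact_Icc)
  rw [Measure.volume_eq_prod] at h1
  exact h1.mono_set (prod_mono Ioc_subset_Icc_self Ioc_subset_Icc_self)

private lemma intInt_param {F : ℝ → ℝ → ℝ} {L T : ℝ} (hL : 0 ≤ L) (hT : 0 ≤ T)
    (hF : ContinuousOn (fun p : ℝ × ℝ => F p.1 p.2) (Icc 0 L ×ˢ Icc 0 T)) :
    IntervalIntegrable (fun t => ∫ x in (0:ℝ)..L, F x t) volume 0 T := by
  have hswap : ContinuousOn (fun p : ℝ × ℝ => F p.2 p.1) (Icc 0 T ×ˢ Icc 0 L) :=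
    hF.comp (Continuous.continuousOn continuous_swap) (fun p hp => ⟨hp.2, hp.1⟩)
  have := (integrable_prod_aux (F := fun t x => F x t) hswap).integral_prod_left
  rw [intervalIntegrable_iff_integrableOn_Ioc_of_le hT]
  refine (this.congr ?_)
  filter_upwards with t
  rw [intervalIntegral.integral_of_le hL]
  rfl

private lemma fubini_aux {F : ℝ → ℝ → ℝ} {L T : ℝ} (hL : 0 ≤ L) (hT : 0 ≤ T)
    (hF : ContinuousOn (fun p : ℝ × ℝ => F p.1 p.2) (Icc 0 L ×ˢ Icc 0 T)) :
    ∫ x in (0:ℝ)..L, ∫ t in (0:ℝ)..T, F x t = ∫ t in (0:ℝ)..T, ∫ x in (0:ℝ)..L, F x t := by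
  have h1 := MeasureTheory.integral_integral_swap (integrable_prod_aux hF)
  rw [intervalIntegral.integral_of_le hL, intervalIntegral.integral_of_le hT]
  simp only [intervalIntegral.integral_of_le hL, intervalIntegral.integral_of_le hT]
  exact h1
private lemma tf_xid {L T m : ℝ} (hL : 0 < L) (hm : 1 < m) {Sbar : ℝ → ℝ}
    (hSint : IntervalIntegrable Sbar volume 0 L)
    (sol : TearFilmSolution L T m (m+1) Sbar) {t : ℝ} (htm : t ∈ Icc 0 T) :
    ∫ x in (0:ℝ)..L, (sol.ht x t * (1-m) * sol.h x t ^ (1-m-1))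
      = -(m*(m-1)) * (∫ x in (0:ℝ)..L, (sol.hxx x t)^2)
        + (m-1) * (∫ x in (0:ℝ)..L, (Sbar x - sol.s x t)) := by
  set Φ : ℝ → ℝ := fun x => (m-1) * (sol.h x t * sol.hxxx x t + m * (sol.hx x t * sol.hxx x t))
    with hΦdef
  set Φ' : ℝ → ℝ := fun x => (m-1) * ((sol.hx x t * sol.hxxx x t + sol.h x t * sol.hxxxx x t)
      + m * (sol.hxx x t * sol.hxx x t + sol.hx x t * sol.hxxx x t)) with hΦ'def
  have hder : ∀ x ∈ Icc (0:ℝ) L, HasDerivWithinAt Φ (Φ' x) (Icc 0 L) x := by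
    intro x hx
    exact (((sol.hasDeriv_hx t htm x hx).mul (sol.hasDeriv_hxxxx t htm x hx)).add
      (((sol.hasDeriv_hxx t htm x hx).mul (sol.hasDeriv_hxxx t htm x hx)).const_mul m)).const_mul
      (m-1)
  -- pointwise identity
  have hpt : ∀ x ∈ Icc (0:ℝ) L,
      sol.ht x t * (1-m) * sol.h x t ^ (1-m-1)
        = Φ' x + (-(m*(m-1)) * (sol.hxx x t)^2 + (m-1) * (Sbar x - sol.s x t)) := by
    intro x hx
    have hpos := sol.h_pos x hx t htm
    have e1 : sol.h x t ^ (1-m-1) * sol.h x t ^ (m+1-1) = 1 := by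
      rw [← Real.rpow_add hpos]
      norm_num
    have e2 : sol.h x t ^ (1-m-1) * sol.h x t ^ (m+1) = sol.h x t := by
      rw [← Real.rpow_add hpos]
      norm_num
    have e3 : sol.h x t ^ (1-m-1) * sol.h x t ^ (m:ℝ) = 1 := by
      rw [← Real.rpow_add hpos]
      norm_num
    rw [sol.pde_h x hx t htm]
    simp only [hΦ'def]
    linear_combination ((1-m)*(-(m+1)*sol.hx x t*sol.hxxx x t))*e1
      + ((1-m)*(-sol.hxxxx x t))*e2 + ((1-m)*(-(Sbar x - sol.s x t)))*e3
  -- integrability pieces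
  have hc2 : ContinuousOn (fun x => (sol.hxx x t)^2) (Icc 0 L) :=
    (contOn_left sol.cont_hxx htm).pow 2
  have hint2 : IntervalIntegrable (fun x => (sol.hxx x t)^2) volume 0 L :=
    ContinuousOn.intervalIntegrable (by rwa [uIcc_of_le hL.le])
  have hints : IntervalIntegrable (fun x => sol.s x t) volume 0 L :=
    ContinuousOn.intervalIntegrable (by rw [uIcc_of_le hL.le]; exact contOn_left sol.cont_s htm)
  have hint3 : IntervalIntegrable (fun x => Sbar x - sol.s x t) volume 0 L := hSint.sub hints
  have hcΦ' : ContinuousOn Φ' (Icc 0 L) := by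
    apply ContinuousOn.mul continuousOn_const
    exact ((((contOn_left sol.cont_hx htm).mul (contOn_left sol.cont_hxxx htm)).add
      ((contOn_left sol.cont_h htm).mul (contOn_left sol.cont_hxxxx htm))).add
      (continuousOn_const.mul
        (((contOn_left sol.cont_hxx htm).mul (contOn_left sol.cont_hxx htm)).add
          ((contOn_left sol.cont_hx htm).mul (contOn_left sol.cont_hxxx htm)))))
  have hintΦ' : IntervalIntegrable Φ' volume 0 L :=
    ContinuousOn.intervalIntegrable (by rwa [uIcc_of_le hL.le])
  -- FTC for Φ
  have hΦftc : ∫ x in (0:ℝ)..L, Φ' x = Φ L - Φ 0 := by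
    apply intervalIntegral.integral_eq_sub_of_hasDeriv_right_of_le hL.le
    · intro x hx
      exact (hder x hx).continuousWithinAt
    · intro x hx
      exact (((hder x ⟨hx.1.le, hx.2.le⟩).hasDerivAt
        (Icc_mem_nhds hx.1 hx.2)).hasDerivWithinAt)
    · exact hintΦ'
  have hΦ0 : Φ L - Φ 0 = 0 := by
    obtain ⟨b1, b2, b3, b4, -, -⟩ := sol.bc t htm
    simp [hΦdef, b1, b2, b3, b4]
  calc ∫ x in (0:ℝ)..L, (sol.ht x t * (1-m) * sol.h x t ^ (1-m-1))
      = ∫ x in (0:ℝ)..L, (Φ' x + (-(m*(m-1)) * (sol.hxx x t)^2 + (m-1) * (Sbar x - sol.s x t))) := by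
        apply intervalIntegral.integral_congr
        intro x hx
        exact hpt x (by rwa [uIcc_of_le hL.le] at hx)
    _ = (∫ x in (0:ℝ)..L, Φ' x)
        + ((∫ x in (0:ℝ)..L, -(m*(m-1)) * (sol.hxx x t)^2)
          + (∫ x in (0:ℝ)..L, (m-1) * (Sbar x - sol.s x t))) := by
        rw [intervalIntegral.integral_add hintΦ' ((hint2.const_mul _).add (hint3.const_mul _)),
          intervalIntegral.integral_add (hint2.const_mul _) (hint3.const_mul _)]
    _ = -(m*(m-1)) * (∫ x in (0:ℝ)..L, (sol.hxx x t)^2)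
        + (m-1) * (∫ x in (0:ℝ)..L, (Sbar x - sol.s x t)) := by
        rw [hΦftc, hΦ0, intervalIntegral.integral_const_mul, intervalIntegral.integral_const_mul]
        ring
private lemma tf_tftc {L T m : ℝ} (hL : 0 < L) {Sbar : ℝ → ℝ}
    (sol : TearFilmSolution L T m (m+1) Sbar) {t : ℝ} (htm : t ∈ Icc 0 T) :
    (∫ x in (0:ℝ)..L, sol.h x t ^ (1-m)) - (∫ x in (0:ℝ)..L, sol.h x 0 ^ (1-m))
      = ∫ t' in (0:ℝ)..t, ∫ x in (0:ℝ)..L,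
          (sol.ht x t' * (1-m) * sol.h x t' ^ (1-m-1)) := by
  have h0T : (0:ℝ) ∈ Icc 0 T := ⟨le_rfl, htm.1.trans htm.2⟩
  have hsub : Icc (0:ℝ) t ⊆ Icc 0 T := Icc_subset_Icc le_rfl htm.2
  have hsubP : Icc (0:ℝ) L ×ˢ Icc (0:ℝ) t ⊆ Icc (0:ℝ) L ×ˢ Icc (0:ℝ) T :=
    prod_mono subset_rfl hsub
  -- continuity of the integrand on the product
  have Dcont : ContinuousOn
      (fun p : ℝ × ℝ => sol.ht p.1 p.2 * (1-m) * sol.h p.1 p.2 ^ (1-m-1))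
      (Icc 0 L ×ˢ Icc 0 T) := by
    refine (sol.cont_ht.mul continuousOn_const).mul (sol.cont_h.rpow_const ?_)
    intro p hp
    exact Or.inl (sol.h_pos p.1 hp.1 p.2 hp.2).ne'
  -- continuity of powers of h
  have hpowcont : ∀ τ ∈ Icc (0:ℝ) T,
      ContinuousOn (fun x => sol.h x τ ^ (1-m)) (Icc 0 L) := by
    intro τ hτ
    refine (contOn_left sol.cont_h hτ).rpow_const ?_
    intro x hx
    exact Or.inl (sol.h_pos x hx τ hτ).ne'
  -- FTC in t for each x
  have step1 : ∀ x ∈ Icc (0:ℝ) L,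
      ∫ t' in (0:ℝ)..t, (sol.ht x t' * (1-m) * sol.h x t' ^ (1-m-1))
        = sol.h x t ^ (1-m) - sol.h x 0 ^ (1-m) := by
    intro x hx
    apply intervalIntegral.integral_eq_sub_of_hasDeriv_right_of_le htm.1
    · refine (((contOn_right sol.cont_h hx).mono hsub).rpow_const ?_)
      intro τ hτ
      exact Or.inl (sol.h_pos x hx τ (hsub hτ)).ne'
    · intro τ hτ
      have hτm : τ ∈ Icc (0:ℝ) T := ⟨hτ.1.le, hτ.2.le.trans htm.2⟩
      have hnb : Icc (0:ℝ) T ∈ nhds τ := Icc_mem_nhds hτ.1 (lt_of_lt_of_le hτ.2 htm.2)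
      exact (((sol.hasDeriv_ht x hx τ hτm).hasDerivAt hnb).rpow_const
        (Or.inl (sol.h_pos x hx τ hτm).ne')).hasDerivWithinAt
    · apply ContinuousOn.intervalIntegrable
      rw [uIcc_of_le htm.1]
      exact (contOn_right (F := fun x t' => sol.ht x t' * (1-m) * sol.h x t' ^ (1-m-1))
        Dcont hx).mono hsub
  have int1 : IntervalIntegrable (fun x => sol.h x t ^ (1-m)) volume 0 L :=
    ContinuousOn.intervalIntegrable (by rw [uIcc_of_le hL.le]; exact hpowcont t htm)
  have int2 : IntervalIntegrable (fun x => sol.h x 0 ^ (1-m)) volume 0 L :=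
    ContinuousOn.intervalIntegrable (by rw [uIcc_of_le hL.le]; exact hpowcont 0 h0T)
  rw [← intervalIntegral.integral_sub int1 int2]
  rw [show (∫ x in (0:ℝ)..L, (sol.h x t ^ (1-m) - sol.h x 0 ^ (1-m)))
      = ∫ x in (0:ℝ)..L, ∫ t' in (0:ℝ)..t, (sol.ht x t' * (1-m) * sol.h x t' ^ (1-m-1)) from
    intervalIntegral.integral_congr (fun x hx =>
      (step1 x (by rwa [uIcc_of_le hL.le] at hx)).symm)]
  exact fubini_aux hL.le htm.1 (Dcont.mono hsubP)
set_option maxHeartbeats 1000000 in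
/-- A-priori bounds: `m(m−1)∫₀^T∫₀^L h_{xx}² ≤ L η^{1−m} + (m−1)‖S̄‖_∞ L T` and
`∫₀^L h(x,t)^{1−m} dx ≤ L η^{1−m} + (m−1)‖S̄‖_∞ L T` for all `t ∈ [0,T]`. -/
theorem apriori_bounds
    (L T m η : ℝ) (hL : 0 < L) (hT : 0 < T) (hm : 1 < m) (hη : 0 < η)
    (Sbar : ℝ → ℝ) (hSmeas : Measurable Sbar)
    (hSbdd : ∃ C : ℝ, ∀ x ∈ Icc (0:ℝ) L, |Sbar x| ≤ C)
    (sol : TearFilmSolution L T m (m + 1) Sbar)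
    (hh0 : ∀ x ∈ Icc (0:ℝ) L, η ≤ sol.h x 0)
    (hs_nonneg : ∀ x ∈ Icc (0:ℝ) L, ∀ t ∈ Icc (0:ℝ) T, 0 ≤ sol.s x t) :
    m * (m - 1) * (∫ t in (0:ℝ)..T, ∫ x in (0:ℝ)..L, (sol.hxx x t) ^ 2)
        ≤ L * η ^ (1 - m)
          + (m - 1) * (essSup (fun x => |Sbar x|) (volume.restrict (Icc (0:ℝ) L))) * L * T ∧
    ∀ t ∈ Icc (0:ℝ) T,
      (∫ x in (0:ℝ)..L, sol.h x t ^ (1 - m))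
        ≤ L * η ^ (1 - m)
          + (m - 1) * (essSup (fun x => |Sbar x|) (volume.restrict (Icc (0:ℝ) L))) * L * T := by
  obtain ⟨C₀, hC₀⟩ := hSbdd
  set C := essSup (fun x => |Sbar x|) (volume.restrict (Icc (0:ℝ) L)) with hCdef
  have hbdd : IsBoundedUnder (· ≤ ·) (ae (volume.restrict (Icc (0:ℝ) L))) (fun x => |Sbar x|) := by
    refine isBoundedUnder_of_eventually_le (a := C₀) ?_
    filter_upwards [ae_restrict_mem measurableSet_Icc] with x hx using hC₀ x hx
  have hae : ∀ᵐ x ∂(volume.restrict (Icc (0:ℝ) L)), |Sbar x| ≤ C := ae_le_essSup hbdd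
  have hC0 : 0 ≤ C := by
    by_contra hneg
    push_neg at hneg
    have hfalse : ∀ᵐ x ∂(volume.restrict (Icc (0:ℝ) L)), False := by
      filter_upwards [hae] with x hx
      linarith [abs_nonneg (Sbar x)]
    have hzero := ae_eq_bot.mp (Filter.eventually_false_iff_eq_bot.mp hfalse)
    have hL0 : volume.restrict (Icc (0:ℝ) L) (Icc 0 L) = 0 := by rw [hzero]; rfl
    rw [Measure.restrict_apply_self, Real.volume_Icc] at hL0
    rw [ENNReal.ofReal_eq_zero] at hL0
    linarith
  have hSint : IntervalIntegrable Sbar volume 0 L := by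
    rw [intervalIntegrable_iff_integrableOn_Ioc_of_le hL.le]
    refine Measure.integrableOn_of_bounded (M := C₀) ?_ hSmeas.aestronglyMeasurable ?_
    · rw [Real.volume_Ioc]; exact ENNReal.ofReal_ne_top
    · filter_upwards [ae_restrict_mem measurableSet_Ioc] with x hx
      rw [Real.norm_eq_abs]; exact hC₀ x (Ioc_subset_Icc_self hx)
  -- the integral of hxx² in x, as a function of t
  have hGint : IntervalIntegrable (fun t => ∫ x in (0:ℝ)..L, (sol.hxx x t)^2) volume 0 T :=
    intInt_param (F := fun x t => (sol.hxx x t)^2) hL.le hT.le (sol.cont_hxx.pow 2)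
  have hJint : IntervalIntegrable (fun t => ∫ x in (0:ℝ)..L, sol.s x t) volume 0 T :=
    intInt_param (F := fun x t => sol.s x t) hL.le hT.le sol.cont_s
  -- the integral of (Sbar - s) in x, as a function of t
  have hIeq : ∀ t' ∈ Icc (0:ℝ) T,
      (∫ x in (0:ℝ)..L, (Sbar x - sol.s x t'))
        = (∫ x in (0:ℝ)..L, Sbar x) - ∫ x in (0:ℝ)..L, sol.s x t' := by
    intro t' ht'
    exact intervalIntegral.integral_sub hSint (ContinuousOn.intervalIntegrable
      (by rw [uIcc_of_le hL.le]; exact contOn_left sol.cont_s ht'))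
  have hIint : IntervalIntegrable (fun t' => ∫ x in (0:ℝ)..L, (Sbar x - sol.s x t'))
      volume 0 T := by
    rw [intervalIntegrable_iff_integrableOn_Ioc_of_le hT.le]
    refine IntegrableOn.congr_fun
      (f := fun t' => (∫ x in (0:ℝ)..L, Sbar x) - ∫ x in (0:ℝ)..L, sol.s x t') ?_
      (fun t' ht' => (hIeq t' (Ioc_subset_Icc_self ht')).symm) measurableSet_Ioc
    rw [← intervalIntegrable_iff_integrableOn_Ioc_of_le hT.le]
    exact (_root_.intervalIntegrable_const (c := ∫ x in (0:ℝ)..L, Sbar x)).sub hJint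
  -- pointwise bound on the (Sbar - s) integral
  have hIbound : ∀ t' ∈ Icc (0:ℝ) T,
      (∫ x in (0:ℝ)..L, (Sbar x - sol.s x t')) ≤ C * L := by
    intro t' ht'
    have hsint' : IntervalIntegrable (fun x => Sbar x - sol.s x t') volume 0 L :=
      hSint.sub (ContinuousOn.intervalIntegrable
        (by rw [uIcc_of_le hL.le]; exact contOn_left sol.cont_s ht'))
    have hle : (∫ x in (0:ℝ)..L, (Sbar x - sol.s x t')) ≤ ∫ x in (0:ℝ)..L, C := by
      refine intervalIntegral.integral_mono_ae_restrict hL.le hsint' intervalIntegrable_const ?_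
      filter_upwards [hae, ae_restrict_mem measurableSet_Icc] with x h1 h2
      have := hs_nonneg x h2 t' ht'
      have := le_abs_self (Sbar x)
      linarith
    calc (∫ x in (0:ℝ)..L, (Sbar x - sol.s x t')) ≤ ∫ x in (0:ℝ)..L, C := hle
      _ = C * L := by simp [intervalIntegral.integral_const, smul_eq_mul]; ring
  -- key identity
  have keyid : ∀ t ∈ Icc (0:ℝ) T,
      (∫ x in (0:ℝ)..L, sol.h x t ^ (1-m)) - (∫ x in (0:ℝ)..L, sol.h x 0 ^ (1-m))
        = -(m*(m-1)) * (∫ t' in (0:ℝ)..t, ∫ x in (0:ℝ)..L, (sol.hxx x t')^2)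
          + (m-1) * (∫ t' in (0:ℝ)..t, ∫ x in (0:ℝ)..L, (Sbar x - sol.s x t')) := by
    intro t htm
    have hsubu : uIcc (0:ℝ) t ⊆ uIcc (0:ℝ) T := by
      rw [uIcc_of_le htm.1, uIcc_of_le hT.le]
      exact Icc_subset_Icc le_rfl htm.2
    rw [tf_tftc hL sol htm]
    rw [intervalIntegral.integral_congr
      (g := fun t' => -(m*(m-1)) * (∫ x in (0:ℝ)..L, (sol.hxx x t')^2)
        + (m-1) * (∫ x in (0:ℝ)..L, (Sbar x - sol.s x t')))
      (fun t' ht' => by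
        rw [uIcc_of_le htm.1] at ht'
        exact tf_xid hL hm hSint sol ⟨ht'.1, ht'.2.trans htm.2⟩)]
    rw [intervalIntegral.integral_add ((hGint.mono_set hsubu).const_mul _)
      ((hIint.mono_set hsubu).const_mul _),
      intervalIntegral.integral_const_mul, intervalIntegral.integral_const_mul]
  -- bound on initial energy
  have hE0 : (∫ x in (0:ℝ)..L, sol.h x 0 ^ (1-m)) ≤ L * η ^ (1-m) := by
    have h0T : (0:ℝ) ∈ Icc (0:ℝ) T := ⟨le_rfl, hT.le⟩
    have hint : IntervalIntegrable (fun x => sol.h x 0 ^ (1-m)) volume 0 L := by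
      apply ContinuousOn.intervalIntegrable
      rw [uIcc_of_le hL.le]
      exact (contOn_left sol.cont_h h0T).rpow_const
        (fun x hx => Or.inl (sol.h_pos x hx 0 h0T).ne')
    calc (∫ x in (0:ℝ)..L, sol.h x 0 ^ (1-m)) ≤ ∫ x in (0:ℝ)..L, η ^ (1-m) :=
          intervalIntegral.integral_mono_on hL.le hint intervalIntegrable_const
            (fun x hx => Real.rpow_le_rpow_of_nonpos hη (hh0 x hx) (by linarith))
      _ = L * η ^ (1-m) := by simp [intervalIntegral.integral_const, smul_eq_mul]
  -- nonnegativity facts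
  have hEnn : ∀ t ∈ Icc (0:ℝ) T, 0 ≤ ∫ x in (0:ℝ)..L, sol.h x t ^ (1-m) := by
    intro t htm
    exact intervalIntegral.integral_nonneg hL.le
      (fun x hx => Real.rpow_nonneg (sol.h_pos x hx t htm).le _)
  have hGnn : ∀ t ∈ Icc (0:ℝ) T,
      0 ≤ ∫ t' in (0:ℝ)..t, ∫ x in (0:ℝ)..L, (sol.hxx x t')^2 := by
    intro t htm
    exact intervalIntegral.integral_nonneg htm.1
      (fun τ _ => intervalIntegral.integral_nonneg hL.le (fun x _ => sq_nonneg _))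
  -- bound on the time integral of I
  have hIt : ∀ t ∈ Icc (0:ℝ) T,
      (∫ t' in (0:ℝ)..t, ∫ x in (0:ℝ)..L, (Sbar x - sol.s x t')) ≤ C * L * t := by
    intro t htm
    have hsubu : uIcc (0:ℝ) t ⊆ uIcc (0:ℝ) T := by
      rw [uIcc_of_le htm.1, uIcc_of_le hT.le]
      exact Icc_subset_Icc le_rfl htm.2
    calc (∫ t' in (0:ℝ)..t, ∫ x in (0:ℝ)..L, (Sbar x - sol.s x t'))
        ≤ ∫ _t' in (0:ℝ)..t, C * L :=
          intervalIntegral.integral_mono_on htm.1 (hIint.mono_set hsubu)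
            intervalIntegrable_const
            (fun t' ht' => hIbound t' ⟨ht'.1, ht'.2.trans htm.2⟩)
      _ = C * L * t := by simp [intervalIntegral.integral_const, smul_eq_mul]; ring
  constructor
  · -- first claim, t = T
    have hTT : T ∈ Icc (0:ℝ) T := ⟨hT.le, le_rfl⟩
    have k := keyid T hTT
    have h1 := hEnn T hTT
    have h2 := hIt T hTT
    have h3 : (m-1) * (∫ t' in (0:ℝ)..T, ∫ x in (0:ℝ)..L, (Sbar x - sol.s x t'))
        ≤ (m-1) * (C * L * T) := by
      apply mul_le_mul_of_nonneg_left h2 (by linarith)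
    linarith
  · intro t htm
    have k := keyid t htm
    have h2 := hIt t htm
    have h3 : (m-1) * (∫ t' in (0:ℝ)..t, ∫ x in (0:ℝ)..L, (Sbar x - sol.s x t'))
        ≤ (m-1) * (C * L * t) := mul_le_mul_of_nonneg_left h2 (by linarith)
    have h4 : C * L * t ≤ C * L * T :=
      mul_le_mul_of_nonneg_left htm.2 (mul_nonneg hC0 hL.le)
    have h5 : (m-1) * (C * L * t) ≤ (m-1) * (C * L * T) :=
      mul_le_mul_of_nonneg_left h4 (by linarith)
    have h6 : 0 ≤ m * (m-1) * (∫ t' in (0:ℝ)..t, ∫ x in (0:ℝ)..L, (sol.hxx x t')^2) :=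
      mul_nonneg (mul_nonneg (by linarith) (by linarith)) (hGnn t htm)
    linarith
end

section
/- Let L, T > 0, let m be a real number, let S̄ : [0,L] → ℝ be bounded and measurable, and let (h,s) be a classical solution of the tear-film system with exponents (m, m+1) on [0,L]×[0,T]. Then the Dirichlet energy of h satisfies the identity: for every t ∈ [0,T], d/dt ∫₀^L ½ h_x(x,t)² dx = ∫₀^L h(x,t)ᵐ h_{xx}(x,t) (S̄(x) − s(x,t)) dx − ∫₀^L h(x,t)^{m+1} h_{xxx}(x,t)² dx. -/
/-!
The data contain no mixed derivative `h_{xt}`, so the energy `E(t) = ∫ ½ h_x²` is differentiated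
through its difference quotients: since `½ (a'² - a²) = ½ (a' + a)(a' - a)`, integration by parts
in `x` (with `h_x = 0` at both ends) gives
`E(t') - E(t) = -∫ ½ (h_xx(t') + h_xx(t)) (h(t') - h(t))`, and dominated convergence (with the
mean value bound on `h_t`) turns the quotient by `t' - t` into `-∫ h_xx h_t`. Substituting the
equation for `h` and integrating by parts once more (now with `h_xxx = 0` at both ends) gives
`-∫ h_xx (hⁿ h_xxx)_x = ∫ hⁿ h_xxx²`.
-/

open Set MeasureTheory intervalIntegral Filter

open Set MeasureTheory

open Topology Function

theorem Convex.norm_slope_le_of_norm_hasDerivWithin_le {f f' : ℝ → ℝ} {s : Set ℝ} {C x y : ℝ}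
    (hf : ∀ z ∈ s, HasDerivWithinAt f (f' z) s z) (bound : ∀ z ∈ s, ‖f' z‖ ≤ C)
    (hs : Convex ℝ s) (hx : x ∈ s) (hy : y ∈ s) : ‖slope f x y‖ ≤ C := by
  rw [slope_def_field, norm_div]
  exact div_le_of_le_mul₀ (norm_nonneg _) ((norm_nonneg _).trans (bound x hx))
    (hs.norm_image_sub_le_of_norm_hasDerivWithin_le hf bound hx hy)

theorem integral_mul_deriv_eq_neg_integral_deriv_mul {a b : ℝ} {u u' v v' : ℝ → ℝ} (hab : a ≤ b)
    (hu : ∀ x ∈ Icc a b, HasDerivWithinAt u (u' x) (Icc a b) x)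
    (hv : ∀ x ∈ Icc a b, HasDerivWithinAt v (v' x) (Icc a b) x)
    (hu' : ContinuousOn u' (Icc a b)) (hv' : ContinuousOn v' (Icc a b))
    (ha : u a * v a = 0) (hb : u b * v b = 0) :
    ∫ x in a..b, u x * v' x = -∫ x in a..b, u' x * v x := by
  rw [← uIcc_of_le hab] at hu hv
  rw [integral_mul_deriv_eq_deriv_mul_of_hasDerivWithinAt hu hv
    (hu'.intervalIntegrable_of_Icc hab) (hv'.intervalIntegrable_of_Icc hab), ha, hb]
  ring

/-- No derivative of `w` in `τ` is needed: the factor `u(x, τ) - u(x, t)` vanishes at `τ = t`. -/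
theorem hasDerivWithinAt_integral_mul_sub {a b c d t : ℝ} {w u u' : ℝ → ℝ → ℝ} (hab : a ≤ b)
    (ht : t ∈ Icc c d) (hw : ContinuousOn (uncurry w) (Icc a b ×ˢ Icc c d))
    (hu : ContinuousOn (uncurry u) (Icc a b ×ˢ Icc c d))
    (hu' : ContinuousOn (uncurry u') (Icc a b ×ˢ Icc c d))
    (hderiv : ∀ x ∈ Icc a b, ∀ τ ∈ Icc c d, HasDerivWithinAt (u x) (u' x τ) (Icc c d) τ) :
    HasDerivWithinAt (fun τ => ∫ x in a..b, w x τ * (u x τ - u x t))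
      (∫ x in a..b, w x t * u' x t) (Icc c d) t := by
  have hK : IsCompact (Icc a b ×ˢ Icc c d) := isCompact_Icc.prod isCompact_Icc
  obtain ⟨Cw, hCw⟩ := hK.exists_bound_of_continuousOn hw
  obtain ⟨Cu, hCu⟩ := hK.exists_bound_of_continuousOn hu'
  have hslope : ∀ x ∈ Icc a b, ∀ τ ∈ Icc c d, ‖slope (u x) t τ‖ ≤ Cu := fun x hx τ hτ =>
    (convex_Icc c d).norm_slope_le_of_norm_hasDerivWithin_le (hderiv x hx)
      (fun σ hσ => hCu (x, σ) ⟨hx, hσ⟩) ht hτ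
  rw [hasDerivWithinAt_iff_tendsto_slope]
  have hlim : Tendsto (fun τ => ∫ x in a..b, w x τ * slope (u x) t τ) (𝓝[Icc c d \ {t}] t)
      (𝓝 (∫ x in a..b, w x t * u' x t)) := by
    refine tendsto_integral_filter_of_dominated_convergence (fun _ => Cw * Cu) ?_ ?_
      intervalIntegrable_const ?_
    · filter_upwards [self_mem_nhdsWithin] with τ hτ
      have hcont : ContinuousOn (fun x => w x τ * slope (u x) t τ) (Icc a b) := by
        simp only [slope_def_field]
        exact (hw.uncurry_right τ hτ.1).mul
          (((hu.uncurry_right τ hτ.1).sub (hu.uncurry_right t ht)).div_const _)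
      exact (hcont.intervalIntegrable_of_Icc hab).def'.aestronglyMeasurable
    · filter_upwards [self_mem_nhdsWithin] with τ hτ
      refine ae_of_all _ fun x hx => ?_
      rw [uIoc_of_le hab] at hx
      have hx' := Ioc_subset_Icc_self hx
      rw [norm_mul]
      exact mul_le_mul (hCw (x, τ) ⟨hx', hτ.1⟩) (hslope x hx' τ hτ.1) (norm_nonneg _)
        ((norm_nonneg _).trans (hCw (x, τ) ⟨hx', hτ.1⟩))
    · refine ae_of_all _ fun x hx => ?_
      rw [uIoc_of_le hab] at hx
      have hx' := Ioc_subset_Icc_self hx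
      exact (((hw.uncurry_left x hx') t ht).mono_left (nhdsWithin_mono _ sdiff_subset)).mul
        (hasDerivWithinAt_iff_tendsto_slope.mp (hderiv x hx' t ht))
  refine hlim.congr fun τ => ?_
  simp only [slope_def_field, sub_self, mul_zero, intervalIntegral.integral_zero, sub_zero,
    ← intervalIntegral.integral_div, mul_div_assoc]

namespace TearFilmSolution

variable {L T m n : ℝ} {Sbar : ℝ → ℝ} (sol : TearFilmSolution L T m n Sbar)

noncomputable def dirichletEnergy (t : ℝ) : ℝ := ∫ x in (0:ℝ)..L, 1 / 2 * sol.hx x t ^ 2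

variable {t : ℝ}

theorem dirichletEnergy_sub (hL : 0 ≤ L) {t' : ℝ} (ht : t ∈ Icc 0 T) (ht' : t' ∈ Icc 0 T) :
    sol.dirichletEnergy t' - sol.dirichletEnergy t =
      -∫ x in (0:ℝ)..L, 1 / 2 * (sol.hxx x t' + sol.hxx x t) * (sol.h x t' - sol.h x t) := by
  have hhx : ∀ τ ∈ Icc 0 T, ContinuousOn (fun x => sol.hx x τ) (Icc 0 L) := fun τ hτ =>
    sol.cont_hx.uncurry_right τ hτ
  have hparts := integral_mul_deriv_eq_neg_integral_deriv_mul hL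
    (u := fun x => 1 / 2 * (sol.hx x t' + sol.hx x t)) (v := fun x => sol.h x t' - sol.h x t)
    (fun x hx => ((sol.hasDeriv_hxx t' ht' x hx).add (sol.hasDeriv_hxx t ht x hx)).const_mul
      (1 / 2 : ℝ))
    (fun x hx => (sol.hasDeriv_hx t' ht' x hx).sub (sol.hasDeriv_hx t ht x hx))
    (continuousOn_const.mul ((sol.cont_hxx.uncurry_right t' ht').add
      (sol.cont_hxx.uncurry_right t ht)))
    ((hhx t' ht').sub (hhx t ht))
    (by simp [(sol.bc t ht).1, (sol.bc t' ht').1])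
    (by simp [(sol.bc t ht).2.1, (sol.bc t' ht').2.1])
  have hint : ∀ τ ∈ Icc 0 T, IntervalIntegrable (fun x => 1 / 2 * sol.hx x τ ^ 2) volume 0 L :=
    fun τ hτ => (continuousOn_const.mul ((hhx τ hτ).pow 2)).intervalIntegrable_of_Icc hL
  rw [dirichletEnergy, dirichletEnergy, ← intervalIntegral.integral_sub (hint t' ht') (hint t ht)]
  convert hparts using 2
  ext x
  ring

theorem hasDerivWithinAt_dirichletEnergy (hL : 0 ≤ L) (ht : t ∈ Icc 0 T) :
    HasDerivWithinAt sol.dirichletEnergy (-∫ x in (0:ℝ)..L, sol.hxx x t * sol.ht x t)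
      (Icc 0 T) t := by
  have hw : ContinuousOn (uncurry fun x τ => 1 / 2 * (sol.hxx x τ + sol.hxx x t))
      (Icc 0 L ×ˢ Icc 0 T) :=
    continuousOn_const.mul (sol.cont_hxx.add
      ((sol.cont_hxx.uncurry_right t ht).comp continuousOn_fst fun _ hp => hp.1))
  have hG := hasDerivWithinAt_integral_mul_sub hL ht hw sol.cont_h sol.cont_ht sol.hasDeriv_ht
  refine ((hasDerivWithinAt_const t _ (sol.dirichletEnergy t)).sub hG).congr_of_mem
    (fun τ hτ => ?_) ht |>.congr_deriv ?_
  · simp only [Pi.sub_apply]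
    linarith [sol.dirichletEnergy_sub hL ht hτ]
  · rw [zero_sub]
    congr 2
    ext x
    ring

theorem continuousOn_rpow (ht : t ∈ Icc 0 T) (p : ℝ) :
    ContinuousOn (fun x => sol.h x t ^ p) (Icc 0 L) :=
  (sol.cont_h.uncurry_right t ht).rpow_const fun x hx => Or.inl (sol.h_pos x hx t ht).ne'

theorem continuousOn_flux (ht : t ∈ Icc 0 T) :
    ContinuousOn (fun x => n * sol.h x t ^ (n - 1) * sol.hx x t * sol.hxxx x t
      + sol.h x t ^ n * sol.hxxxx x t) (Icc 0 L) :=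
  (((continuousOn_const.mul (sol.continuousOn_rpow ht _)).mul
    (sol.cont_hx.uncurry_right t ht)).mul (sol.cont_hxxx.uncurry_right t ht)).add
    ((sol.continuousOn_rpow ht _).mul (sol.cont_hxxxx.uncurry_right t ht))

theorem hasDerivWithinAt_rpow_mul_hxxx (ht : t ∈ Icc 0 T) {x : ℝ} (hx : x ∈ Icc 0 L) :
    HasDerivWithinAt (fun x => sol.h x t ^ n * sol.hxxx x t)
      (n * sol.h x t ^ (n - 1) * sol.hx x t * sol.hxxx x t + sol.h x t ^ n * sol.hxxxx x t)
      (Icc 0 L) x := by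
  refine (((sol.hasDeriv_hx t ht x hx).rpow_const (p := n)
    (Or.inl (sol.h_pos x hx t ht).ne')).mul (sol.hasDeriv_hxxxx t ht x hx)).congr_deriv ?_
  ring

theorem integral_hxx_mul_flux (hL : 0 ≤ L) (ht : t ∈ Icc 0 T) :
    ∫ x in (0:ℝ)..L, sol.hxx x t * (n * sol.h x t ^ (n - 1) * sol.hx x t * sol.hxxx x t
      + sol.h x t ^ n * sol.hxxxx x t) = -∫ x in (0:ℝ)..L, sol.h x t ^ n * sol.hxxx x t ^ 2 := by
  rw [integral_mul_deriv_eq_neg_integral_deriv_mul hL (u := fun x => sol.hxx x t)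
    (v := fun x => sol.h x t ^ n * sol.hxxx x t) (fun x hx => sol.hasDeriv_hxxx t ht x hx)
    (fun x hx => sol.hasDerivWithinAt_rpow_mul_hxxx ht hx) (sol.cont_hxxx.uncurry_right t ht)
    (sol.continuousOn_flux ht) (by simp [(sol.bc t ht).2.2.1])
    (by simp [(sol.bc t ht).2.2.2.1])]
  congr 2
  ext x
  ring

theorem neg_integral_hxx_mul_ht (hL : 0 ≤ L) (ht : t ∈ Icc 0 T) :
    -∫ x in (0:ℝ)..L, sol.hxx x t * sol.ht x t =
      (∫ x in (0:ℝ)..L, sol.h x t ^ m * sol.hxx x t * (Sbar x - sol.s x t))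
        - ∫ x in (0:ℝ)..L, sol.h x t ^ n * sol.hxxx x t ^ 2 := by
  have hxx := sol.cont_hxx.uncurry_right t ht
  -- by the equation for `h`, the source term is a combination of continuous functions
  have hsource : ∫ x in (0:ℝ)..L, sol.h x t ^ m * sol.hxx x t * (Sbar x - sol.s x t) =
      (∫ x in (0:ℝ)..L, -(sol.hxx x t * sol.ht x t)) - ∫ x in (0:ℝ)..L, sol.hxx x t *
        (n * sol.h x t ^ (n - 1) * sol.hx x t * sol.hxxx x t + sol.h x t ^ n * sol.hxxxx x t) := by
    have hint_ht : IntervalIntegrable (fun x => -(sol.hxx x t * sol.ht x t)) volume 0 L :=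
      (hxx.mul (sol.cont_ht.uncurry_right t ht)).neg.intervalIntegrable_of_Icc hL
    have hint_flux : IntervalIntegrable (fun x => sol.hxx x t *
        (n * sol.h x t ^ (n - 1) * sol.hx x t * sol.hxxx x t + sol.h x t ^ n * sol.hxxxx x t))
        volume 0 L :=
      (hxx.mul (sol.continuousOn_flux ht)).intervalIntegrable_of_Icc hL
    rw [← intervalIntegral.integral_sub hint_ht hint_flux]
    refine intervalIntegral.integral_congr fun x hx => ?_
    rw [uIcc_of_le hL] at hx
    simp only [sol.pde_h x hx t ht]
    ring
  rw [hsource, sol.integral_hxx_mul_flux hL ht, intervalIntegral.integral_neg]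
  ring

end TearFilmSolution

theorem dirichlet_energy_identity_general
    (L T m : ℝ) (hL : 0 < L)
    (Sbar : ℝ → ℝ)
    (sol : TearFilmSolution L T m (m + 1) Sbar) :
    ∀ t ∈ Icc (0:ℝ) T,
      HasDerivWithinAt (fun t' => ∫ x in (0:ℝ)..L, (1 / 2) * (sol.hx x t') ^ 2)
        ((∫ x in (0:ℝ)..L, sol.h x t ^ m * sol.hxx x t * (Sbar x - sol.s x t))
          - ∫ x in (0:ℝ)..L, sol.h x t ^ (m + 1) * (sol.hxxx x t) ^ 2)
        (Icc (0:ℝ) T) t := by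
  intro t ht
  rw [← sol.neg_integral_hxx_mul_ht hL.le ht]
  exact sol.hasDerivWithinAt_dirichletEnergy hL.le ht

/-- Dirichlet-energy identity for the case `n = m + 1`:
`d/dt ∫₀^L ½ h_x² dx = ∫₀^L hᵐ h_{xx}(S̄ − s) dx − ∫₀^L h^{m+1} h_{xxx}² dx`. -/
theorem dirichlet_energy_identity
    (L T m : ℝ) (hL : 0 < L) (hT : 0 < T)
    (Sbar : ℝ → ℝ) (hSmeas : Measurable Sbar)
    (hSbdd : ∃ C : ℝ, ∀ x ∈ Icc (0:ℝ) L, |Sbar x| ≤ C)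
    (sol : TearFilmSolution L T m (m + 1) Sbar) :
    ∀ t ∈ Icc (0:ℝ) T,
      HasDerivWithinAt (fun t' => ∫ x in (0:ℝ)..L, (1 / 2) * (sol.hx x t') ^ 2)
        ((∫ x in (0:ℝ)..L, sol.h x t ^ m * sol.hxx x t * (Sbar x - sol.s x t))
          - ∫ x in (0:ℝ)..L, sol.h x t ^ (m + 1) * (sol.hxxx x t) ^ 2)
        (Icc (0:ℝ) T) t :=
  dirichlet_energy_identity_general L T m hL Sbar sol
end

section
/- Let m ≥ 3 and L, C, K > 0 be real numbers. Then there exists a constant c > 0, depending only on m, L, C and K, with the following property: for every continuous function h : [0,L] → ℝ with h > 0, every point x_c ∈ [0,L] at which h attains its minimum, if h(x) ≤ h(x_c) + C|x − x_c|^{1/2} for all x ∈ [0,L] and ∫₀^L h(x)^{1−m} dx ≤ K, then h(x_c) ≥ c. -/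
open Set MeasureTheory intervalIntegral Filter Real

lemma aux_ftc (ε C A a : ℝ) (hε : 0 < ε) (hC : 0 < C) (ha : 0 < a) :
    ∫ t in (0:ℝ)..a, A / (ε + C * Real.sqrt |t|) ^ 2
      = (2*A/C^2) * ((Real.log (ε + C*Real.sqrt a) + ε/(ε + C*Real.sqrt a))
          - (Real.log ε + 1)) := by
  set F : ℝ → ℝ := fun t => (2*A/C^2) * (Real.log (ε + C*Real.sqrt t) + ε/(ε + C*Real.sqrt t)) with hF
  have hpos : ∀ t : ℝ, 0 < ε + C * Real.sqrt t := fun t => by positivity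
  have hcont : ContinuousOn F (Icc 0 a) := by
    apply ContinuousOn.mul continuousOn_const
    apply ContinuousOn.add
    · exact ((continuousOn_const.add (continuousOn_const.mul
        Real.continuous_sqrt.continuousOn)).log (fun t _ => (hpos t).ne'))
    · exact continuousOn_const.div (continuousOn_const.add (continuousOn_const.mul
        Real.continuous_sqrt.continuousOn)) (fun t _ => (hpos t).ne')
  have hgcont : Continuous (fun t : ℝ => A / (ε + C * Real.sqrt |t|) ^ 2) := by
    apply continuous_const.div
    · continuity
    · intro t
      have : 0 < ε + C * Real.sqrt |t| := by positivity
      positivity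
  have hderiv : ∀ x ∈ Ioo (0:ℝ) a,
      HasDerivWithinAt F (A / (ε + C * Real.sqrt |x|) ^ 2) (Ioi x) x := by
    intro x hx
    have hx0 : 0 < x := hx.1
    have hsx : 0 < Real.sqrt x := Real.sqrt_pos.mpr hx0
    have hux : 0 < ε + C * Real.sqrt x := hpos x
    have hu : HasDerivAt (fun t => ε + C * Real.sqrt t) (C * (1 / (2 * Real.sqrt x))) x :=
      ((Real.hasDerivAt_sqrt hx0.ne').const_mul C).const_add ε
    have h1 : HasDerivAt (fun t => Real.log (ε + C * Real.sqrt t))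
        (C * (1 / (2 * Real.sqrt x)) / (ε + C * Real.sqrt x)) x := hu.log hux.ne'
    have h2 : HasDerivAt (fun t => ε / (ε + C * Real.sqrt t))
        (ε * (-(C * (1 / (2 * Real.sqrt x))) / (ε + C * Real.sqrt x) ^ 2)) x := by
      simpa [div_eq_mul_inv] using (hu.inv hux.ne').const_mul ε
    have h3 := ((h1.add h2).const_mul (2*A/C^2))
    have habs : Real.sqrt |x| = Real.sqrt x := by rw [abs_of_pos hx0]
    have heq : (2*A/C^2) * (C * (1 / (2 * Real.sqrt x)) / (ε + C * Real.sqrt x)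
        + ε * (-(C * (1 / (2 * Real.sqrt x))) / (ε + C * Real.sqrt x) ^ 2))
        = A / (ε + C * Real.sqrt |x|) ^ 2 := by
      rw [habs]
      have hsq : Real.sqrt x * Real.sqrt x = x := Real.mul_self_sqrt hx0.le
      field_simp
      ring_nf
    exact (heq ▸ h3).hasDerivWithinAt
  have := intervalIntegral.integral_eq_sub_of_hasDeriv_right_of_le ha.le hcont hderiv
    (hgcont.intervalIntegrable 0 a)
  rw [this]
  simp [hF, Real.sqrt_zero, div_self hε.ne']
  ring

/-- Uniform positive lower bound for the minimum of `h` from the Hölder bound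
and the entropy bound, for `m ≥ 3`. -/
theorem min_lower_bound
    (m L C K : ℝ) (hm : 3 ≤ m) (hL : 0 < L) (hC : 0 < C) (hK : 0 < K) :
    ∃ c : ℝ, 0 < c ∧
      ∀ h : ℝ → ℝ, ContinuousOn h (Icc (0:ℝ) L) →
        (∀ x ∈ Icc (0:ℝ) L, 0 < h x) →
        ∀ xc ∈ Icc (0:ℝ) L,
          (∀ x ∈ Icc (0:ℝ) L, h xc ≤ h x) →
          (∀ x ∈ Icc (0:ℝ) L, h x ≤ h xc + C * |x - xc| ^ ((1:ℝ) / 2)) →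
          (∫ x in (0:ℝ)..L, h x ^ (1 - m)) ≤ K →
          c ≤ h xc := by
  set A : ℝ := (1 + C * Real.sqrt L) ^ ((3:ℝ) - m) with hAdef
  have hA : 0 < A := Real.rpow_pos_of_pos (by positivity) _
  set a : ℝ := L / 2 with hadef
  have ha : 0 < a := by positivity
  set c₀ : ℝ := C * Real.sqrt a * Real.exp (-(1 + K * C^2 / (2*A))) with hc₀def
  have hc₀ : 0 < c₀ := by positivity
  refine ⟨min 1 c₀, lt_min one_pos hc₀, ?_⟩
  intro h hcont hpos xc hxc hmin hhold hint
  set ε : ℝ := h xc with hεdef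
  have hε : 0 < ε := hpos xc hxc
  rcases le_or_gt 1 ε with h1 | h1
  · exact le_trans (min_le_left _ _) h1
  have hε1 : ε ≤ 1 := h1.le
  -- choose a subinterval [u,v] of length a on one side of xc
  set g : ℝ → ℝ := fun t => A / (ε + C * Real.sqrt |t|) ^ 2 with hgdef
  have hgpos : ∀ t : ℝ, 0 < ε + C * Real.sqrt |t| := fun t => by positivity
  have hgcont : Continuous g := by
    apply continuous_const.div
    · continuity
    · intro t; have := hgpos t; positivity
  obtain ⟨u, v, hu0, hvL, huva, hIval⟩ :
      ∃ u v : ℝ, 0 ≤ u ∧ v ≤ L ∧ v = u + a ∧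
        (∫ x in u..v, g (x - xc)) = ∫ t in (0:ℝ)..a, g t := by
    rcases le_or_gt xc a with hxa | hxa
    · refine ⟨xc, xc + a, hxc.1, by simp [hadef]; linarith, rfl, ?_⟩
      rw [intervalIntegral.integral_comp_sub_right g xc]
      norm_num
    · refine ⟨xc - a, xc, by linarith, hxc.2, by ring, ?_⟩
      rw [intervalIntegral.integral_comp_sub_right g xc]
      have heven : ∀ x : ℝ, g (-x) = g x := fun x => by simp [hgdef, abs_neg]
      have := intervalIntegral.integral_comp_neg (a := (0:ℝ)) (b := a) (f := g)
      simp only [heven, neg_zero] at this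
      simp only [sub_sub_cancel_left, sub_self]
      exact this.symm
  have huv : u ≤ v := by rw [huva]; linarith
  have hsub : Icc u v ⊆ Icc 0 L := Icc_subset_Icc hu0 hvL
  -- continuity / integrability of the entropy integrand
  have hcont_pow : ContinuousOn (fun x => h x ^ (1 - m)) (Icc 0 L) :=
    hcont.rpow_const (fun x hx => Or.inl (hpos x hx).ne')
  have hII : ∀ p q : ℝ, p ∈ Icc (0:ℝ) L → q ∈ Icc (0:ℝ) L →
      IntervalIntegrable (fun x => h x ^ (1 - m)) volume p q := fun p q hp hq =>
    (hcont_pow.mono (by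
      rw [← uIcc_of_le hL.le]
      exact uIcc_subset_uIcc (by rw [uIcc_of_le hL.le]; exact hp)
        (by rw [uIcc_of_le hL.le]; exact hq))).intervalIntegrable
  -- pointwise bound on [u,v]
  have hpoint : ∀ x ∈ Icc u v, g (x - xc) ≤ h x ^ (1 - m) := by
    intro x hx
    have hxL : x ∈ Icc 0 L := hsub hx
    have hhx : 0 < h x := hpos x hxL
    have habsL : |x - xc| ≤ L := abs_le.mpr
      ⟨by linarith [hxL.1, hxL.2, hxc.1, hxc.2], by linarith [hxL.1, hxL.2, hxc.1, hxc.2]⟩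
    set b : ℝ := ε + C * Real.sqrt |x - xc| with hbdef
    have hb : 0 < b := hgpos (x - xc)
    have hbx : h x ≤ b := by
      have := hhold x hxL
      rwa [← Real.sqrt_eq_rpow] at this
    have h1m : (1:ℝ) - m ≤ 0 := by linarith
    have step1 : b ^ ((1:ℝ) - m) ≤ h x ^ ((1:ℝ) - m) :=
      Real.rpow_le_rpow_of_nonpos hhx hbx h1m
    have hble : b ≤ 1 + C * Real.sqrt L := by
      have h2 : Real.sqrt |x - xc| ≤ Real.sqrt L := Real.sqrt_le_sqrt habsL
      have := mul_le_mul_of_nonneg_left h2 hC.le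
      simp only [hbdef]; linarith
    have step2 : A ≤ b ^ ((3:ℝ) - m) :=
      Real.rpow_le_rpow_of_nonpos hb hble (by linarith)
    have hsplit : b ^ ((1:ℝ) - m) = b ^ ((-2:ℝ)) * b ^ ((3:ℝ) - m) := by
      rw [← Real.rpow_add hb]; ring_nf
    have hneg2 : b ^ ((-2:ℝ)) = (b ^ 2)⁻¹ := by
      rw [show ((-2:ℝ)) = -((2:ℕ):ℝ) by norm_num, Real.rpow_neg hb.le, Real.rpow_natCast]
    have hmain : g (x - xc) ≤ b ^ ((1:ℝ) - m) := by
      rw [hsplit, hneg2]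
      have hb2 : (0:ℝ) ≤ (b^2)⁻¹ := by positivity
      calc g (x - xc) = (b^2)⁻¹ * A := by rw [hgdef]; simp only [hbdef]; ring
        _ ≤ (b^2)⁻¹ * b ^ ((3:ℝ)-m) := mul_le_mul_of_nonneg_left step2 hb2
    linarith
  -- comparison of integrals
  have h0m : (0:ℝ) ∈ Icc (0:ℝ) L := ⟨le_refl _, hL.le⟩
  have hLm : L ∈ Icc (0:ℝ) L := ⟨hL.le, le_refl _⟩
  have hum : u ∈ Icc (0:ℝ) L := ⟨hu0, le_trans huv hvL⟩
  have hvm : v ∈ Icc (0:ℝ) L := ⟨le_trans hu0 huv, hvL⟩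
  have hIIuv := hII u v hum hvm
  have hIg : IntervalIntegrable (fun x => g (x - xc)) volume u v :=
    (hgcont.comp (continuous_id.sub continuous_const)).intervalIntegrable u v
  have hstepB : (∫ x in u..v, g (x - xc)) ≤ ∫ x in u..v, h x ^ (1-m) :=
    intervalIntegral.integral_mono_on huv hIg hIIuv hpoint
  have hnn : ∀ p q, p ∈ Icc (0:ℝ) L → q ∈ Icc (0:ℝ) L → p ≤ q →
      0 ≤ ∫ x in p..q, h x ^ (1-m) := by
    intro p q hp hq hpq
    apply intervalIntegral.integral_nonneg hpq
    intro x hx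
    exact Real.rpow_nonneg (hpos x (Icc_subset_Icc hp.1 hq.2 hx)).le _
  have hstepA : (∫ x in u..v, h x ^ (1-m)) ≤ ∫ x in (0:ℝ)..L, h x ^ (1-m) := by
    have e1 : (∫ x in (0:ℝ)..u, h x ^ (1-m)) + (∫ x in u..v, h x ^ (1-m)) =
        ∫ x in (0:ℝ)..v, h x ^ (1-m) :=
      intervalIntegral.integral_add_adjacent_intervals (hII 0 u h0m hum) hIIuv
    have e2 : (∫ x in (0:ℝ)..v, h x ^ (1-m)) + (∫ x in v..L, h x ^ (1-m)) =
        ∫ x in (0:ℝ)..L, h x ^ (1-m) :=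
      intervalIntegral.integral_add_adjacent_intervals (hII 0 v h0m hvm) (hII v L hvm hLm)
    linarith [hnn 0 u h0m hum hu0, hnn v L hvm hLm hvL]
  have key : (∫ t in (0:ℝ)..a, g t) ≤ K := by
    rw [← hIval]; linarith
  simp only [hgdef] at key
  rw [aux_ftc ε C A a hε hC ha] at key
  -- final algebra
  set s : ℝ := C * Real.sqrt a with hsdef
  have hspos : 0 < s := by positivity
  have hlog1 : Real.log s ≤ Real.log (ε + s) := Real.log_le_log hspos (by linarith)
  have hfrac : 0 ≤ ε / (ε + s) := by positivity
  have h2A : 0 < 2*A/C^2 := by positivity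
  have hX : Real.log s - Real.log ε - 1 ≤ K / (2*A/C^2) := by
    have h4 : (Real.log (ε+s) + ε/(ε+s)) - (Real.log ε + 1) ≤ K / (2*A/C^2) :=
      (le_div_iff₀' h2A).mpr key
    linarith
  have hdiv : K / (2*A/C^2) = K * C^2/(2*A) := by
    field_simp
  have hlogε : Real.log s - (1 + K*C^2/(2*A)) ≤ Real.log ε := by
    rw [hdiv] at hX; linarith
  have hfin : c₀ ≤ ε := by
    calc c₀ = Real.exp (Real.log s - (1 + K*C^2/(2*A))) := by
          rw [hc₀def, Real.exp_sub, Real.exp_log hspos, Real.exp_neg, ← div_eq_mul_inv]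
      _ ≤ Real.exp (Real.log ε) := Real.exp_le_exp.mpr hlogε
      _ = ε := Real.exp_log hε
  exact le_trans (min_le_right _ _) hfin
end

section
/- Let m > 3 and L, C, K > 0 be real numbers. Let h : [0,L] → ℝ be continuous with h > 0, let x_c ∈ [0,L] be a point at which h attains its minimum a = h(x_c), suppose h(x) ≤ a + C|x − x_c|^{1/2} for all x ∈ [0,L], and suppose ∫₀^L h(x)^{1−m} dx ≤ K. Then for every ε ∈ (0, L/2], a ≥ (ε/K)^{1/(m−1)} − C ε^{1/2}. Moreover, since 1/(m−1) < 1/2, there exists ε ∈ (0, L/2] for which the right-hand side (ε/K)^{1/(m−1)} − C ε^{1/2} is strictly positive. -/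
open Set MeasureTheory intervalIntegral Filter Real

/-- Positive lower bound for the minimum film thickness when `m > 3`. -/
theorem min_lower_bound_m_gt_three
    (m L C K : ℝ) (hm : 3 < m) (hL : 0 < L) (hC : 0 < C) (hK : 0 < K)
    (h : ℝ → ℝ) (hcont : ContinuousOn h (Icc (0:ℝ) L))
    (hpos : ∀ x ∈ Icc (0:ℝ) L, 0 < h x)
    (xc : ℝ) (hxc : xc ∈ Icc (0:ℝ) L)
    (hmin : ∀ x ∈ Icc (0:ℝ) L, h xc ≤ h x)
    (hHolder : ∀ x ∈ Icc (0:ℝ) L, h x ≤ h xc + C * |x - xc| ^ ((1:ℝ) / 2))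
    (hint : (∫ x in (0:ℝ)..L, h x ^ (1 - m)) ≤ K) :
    (∀ ε : ℝ, 0 < ε → ε ≤ L / 2 →
      (ε / K) ^ (1 / (m - 1)) - C * ε ^ ((1:ℝ) / 2) ≤ h xc) ∧
    ∃ ε : ℝ, 0 < ε ∧ ε ≤ L / 2 ∧
      0 < (ε / K) ^ (1 / (m - 1)) - C * ε ^ ((1:ℝ) / 2) := by
  have ha : 0 < h xc := hpos xc hxc
  have hm1 : (0:ℝ) < m - 1 := by linarith
  constructor
  · intro ε hε hεL
    set a := h xc with ha_def
    set b := a + C * ε ^ ((1:ℝ)/2) with hb_def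
    have hεpow : 0 < ε ^ ((1:ℝ)/2) := Real.rpow_pos_of_pos hε _
    have hb : 0 < b := by positivity
    -- choose a subinterval [u, u+ε] ⊆ [0,L] with |x - xc| ≤ ε on it
    obtain ⟨u, hu0, huL, hunear⟩ :
        ∃ u, 0 ≤ u ∧ u + ε ≤ L ∧ ∀ x ∈ Icc u (u + ε), |x - xc| ≤ ε := by
      rcases le_or_gt xc (L / 2) with hcase | hcase
      · refine ⟨xc, hxc.1, by linarith, fun x hx => ?_⟩
        rw [abs_le]; constructor <;> [linarith [hx.1]; linarith [hx.2]]
      · refine ⟨xc - ε, by linarith, by linarith [hxc.2], fun x hx => ?_⟩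
        rw [abs_le]; constructor <;> [linarith [hx.1]; linarith [hx.2]]
    have hsub : Icc u (u + ε) ⊆ Icc (0:ℝ) L := fun x hx =>
      ⟨le_trans hu0 hx.1, le_trans hx.2 huL⟩
    -- pointwise bound on the subinterval
    have hpt : ∀ x ∈ Icc u (u + ε), b ^ (1 - m) ≤ h x ^ (1 - m) := by
      intro x hx
      have hxL := hsub hx
      have h1 : h x ≤ b := by
        refine le_trans (hHolder x hxL) ?_
        have : |x - xc| ^ ((1:ℝ)/2) ≤ ε ^ ((1:ℝ)/2) :=
          Real.rpow_le_rpow (abs_nonneg _) (hunear x hx) (by norm_num)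
        nlinarith
      exact Real.rpow_le_rpow_of_nonpos (hpos x hxL) h1 (by linarith)
    -- integrability
    have hcont' : ContinuousOn (fun x => h x ^ (1 - m)) (Icc (0:ℝ) L) :=
      hcont.rpow_const (fun x hx => Or.inl (hpos x hx).ne')
    have hInt : IntervalIntegrable (fun x => h x ^ (1 - m)) volume 0 L := by
      apply ContinuousOn.intervalIntegrable
      rwa [uIcc_of_le hL.le]
    have hIntSub : IntervalIntegrable (fun x => h x ^ (1 - m)) volume u (u + ε) := by
      apply hInt.mono_set
      rw [uIcc_of_le (by linarith : u ≤ u + ε), uIcc_of_le hL.le]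
      exact hsub
    -- lower bound for the integral over the subinterval
    have h1 : ε * b ^ (1 - m) ≤ ∫ x in u..(u + ε), h x ^ (1 - m) := by
      have := intervalIntegral.integral_mono_on (by linarith : u ≤ u + ε)
        (_root_.intervalIntegrable_const (c := b ^ (1 - m))) hIntSub hpt
      simpa [mul_comm] using this
    have h2 : (∫ x in u..(u + ε), h x ^ (1 - m)) ≤ ∫ x in (0:ℝ)..L, h x ^ (1 - m) := by
      refine intervalIntegral.integral_mono_interval hu0 (by linarith) huL ?_ hInt
      filter_upwards [ae_restrict_mem measurableSet_Ioc] with x hx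
      exact (Real.rpow_pos_of_pos (hpos x ⟨hx.1.le, hx.2⟩) _).le
    have hkey : ε * b ^ (1 - m) ≤ K := le_trans h1 (le_trans h2 hint)
    -- rewrite b ^ (1-m)
    have hbm : b ^ (1 - m) = (b ^ (m - 1))⁻¹ := by
      rw [show (1 - m) = -(m - 1) by ring, Real.rpow_neg hb.le]
    have hbm1pos : 0 < b ^ (m - 1) := Real.rpow_pos_of_pos hb _
    have hεK : ε / K ≤ b ^ (m - 1) := by
      rw [hbm] at hkey
      have h3 := mul_le_mul_of_nonneg_right hkey hbm1pos.le
      rw [mul_assoc, inv_mul_cancel₀ hbm1pos.ne', mul_one] at h3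
      rw [div_le_iff₀ hK]
      linarith
    have hfinal : (ε / K) ^ (1 / (m - 1)) ≤ b := by
      have := Real.rpow_le_rpow (by positivity) hεK (by positivity : (0:ℝ) ≤ 1 / (m - 1))
      rwa [← Real.rpow_mul hb.le, mul_one_div, div_self hm1.ne',
        Real.rpow_one] at this
    linarith [hfinal]
  · -- existence of a good ε
    set p := 1 / (m - 1) with hp_def
    have hp : 0 < p := by positivity
    have hpq : p < 1/2 := by
      rw [hp_def, div_lt_div_iff₀ hm1 (by norm_num)]
      linarith
    set q := 1/2 - p with hq_def
    have hq : 0 < q := by simp [hq_def]; linarith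
    set A := (C * K ^ p)⁻¹ with hA_def
    have hCKp : 0 < C * K ^ p := by positivity
    have hA : 0 < A := by positivity
    set δ := A ^ (1/q) with hδ_def
    have hδ : 0 < δ := Real.rpow_pos_of_pos hA _
    refine ⟨min (L/2) (δ/2), by positivity, min_le_left _ _, ?_⟩
    set ε := min (L/2) (δ/2) with hε_def
    have hεpos : 0 < ε := by positivity
    have hεδ : ε < δ := lt_of_le_of_lt (min_le_right _ _) (by linarith)
    have hεq : ε ^ q < A := by
      have := Real.rpow_lt_rpow hεpos.le hεδ hq
      rwa [hδ_def, ← Real.rpow_mul hA.le, one_div, inv_mul_cancel₀ hq.ne',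
        Real.rpow_one] at this
    -- deduce ε^(p - 1/2) > C K^p, i.e. the desired strict inequality
    have hkey : C * K ^ p * ε ^ ((1:ℝ)/2) < ε ^ p := by
      have h1 : C * K ^ p < (ε ^ q)⁻¹ := by
        rw [hA_def] at hεq
        exact (lt_inv_comm₀ (Real.rpow_pos_of_pos hεpos _) hCKp).mp hεq
      have h2 : (ε ^ q)⁻¹ * ε ^ ((1:ℝ)/2) = ε ^ p := by
        rw [← Real.rpow_neg hεpos.le, ← Real.rpow_add hεpos]
        congr 1
        rw [hq_def]; ring
      calc C * K ^ p * ε ^ ((1:ℝ)/2)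
          < (ε ^ q)⁻¹ * ε ^ ((1:ℝ)/2) := by
            apply mul_lt_mul_of_pos_right h1 (Real.rpow_pos_of_pos hεpos _)
        _ = ε ^ p := h2
    have hdiv : (ε / K) ^ p = ε ^ p / K ^ p :=
      Real.div_rpow hεpos.le hK.le _
    rw [sub_pos, hdiv]
    rw [lt_div_iff₀ (by positivity : (0:ℝ) < K ^ p)]
    nlinarith [hkey]
end

section
/- Let L, C, K > 0 be real numbers. Let h : [0,L] → ℝ be continuous with h > 0, let x_c ∈ [0,L] be a point at which h attains its minimum a = h(x_c), suppose h(x) ≤ a + C|x − x_c|^{1/2} for all x ∈ [0,L], and suppose ∫₀^L h(x)^{−2} dx ≤ K. Then a ≥ C √(L/2) · (exp(2C²K) − 1)^{−1/2}. -/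
open Set MeasureTheory intervalIntegral Filter Real

/-!
With `a = h x_c`, the Hölder bound and `(a + C√u)² ≤ 2a² + 2C²u` give
`h(x)⁻² ≥ (2a² + 2C²|x - x_c|)⁻¹`. Integrating this over an interval of length `L / 2` on one
side of `x_c` gives `(2C²)⁻¹ log (1 + C²L / (2a²)) ≤ K`, which rearranges to the bound.
-/

section HalfInterval

variable {f φ : ℝ → ℝ} {L x₀ T : ℝ}

lemma integral_comp_add_le_integral (hf : IntervalIntegrable f volume 0 L)
    (hf₀ : ∀ x ∈ Icc 0 L, 0 ≤ f x) (hx₀ : 0 ≤ x₀) (hT : 0 ≤ T) (hTL : x₀ + T ≤ L) :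
    ∫ u in 0..T, f (x₀ + u) ≤ ∫ x in 0..L, f x := by
  rw [integral_comp_add_left, add_zero]
  refine integral_mono_interval hx₀ (by linarith) hTL ?_ hf
  filter_upwards [ae_restrict_mem measurableSet_Ioc] with x hx
  exact hf₀ x (Ioc_subset_Icc_self hx)

lemma integral_comp_sub_le_integral (hf : IntervalIntegrable f volume 0 L)
    (hf₀ : ∀ x ∈ Icc 0 L, 0 ≤ f x) (hx₀ : x₀ ≤ L) (hT : 0 ≤ T) (hTx₀ : T ≤ x₀) :
    ∫ u in 0..T, f (x₀ - u) ≤ ∫ x in 0..L, f x := by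
  rw [integral_comp_sub_left, sub_zero]
  refine integral_mono_interval (by linarith) (by linarith) hx₀ ?_ hf
  filter_upwards [ae_restrict_mem measurableSet_Ioc] with x hx
  exact hf₀ x (Ioc_subset_Icc_self hx)

-- Of the two intervals `[x₀, L]` and `[0, x₀]`, one has length at least `L / 2`.
lemma integral_half_le_integral_of_le_comp_abs_sub (hx₀ : x₀ ∈ Icc 0 L)
    (hf : IntervalIntegrable f volume 0 L) (hf₀ : ∀ x ∈ Icc 0 L, 0 ≤ f x)
    (hφ : IntervalIntegrable φ volume 0 (L / 2)) (hφf : ∀ x ∈ Icc 0 L, φ |x - x₀| ≤ f x) :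
    ∫ u in 0..L / 2, φ u ≤ ∫ x in 0..L, f x := by
  have hT : 0 ≤ L / 2 := by linarith [hx₀.1.trans hx₀.2]
  rcases le_total (x₀ + L / 2) L with hright | hleft
  · have hsub : uIcc x₀ (x₀ + L / 2) ⊆ uIcc 0 L := by
      rw [uIcc_of_le (by linarith), uIcc_of_le (by linarith)]
      exact Icc_subset_Icc hx₀.1 hright
    have hint : IntervalIntegrable (fun u ↦ f (x₀ + u)) volume 0 (L / 2) := by
      simpa using (hf.mono_set hsub).comp_add_left x₀
    calc ∫ u in 0..L / 2, φ u ≤ ∫ u in 0..L / 2, f (x₀ + u) :=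
          integral_mono_on hT hφ hint fun u hu ↦ by
            simpa [abs_of_nonneg hu.1] using
              hφf (x₀ + u) ⟨by linarith [hx₀.1, hu.1], by linarith [hu.2]⟩
      _ ≤ ∫ x in 0..L, f x := integral_comp_add_le_integral hf hf₀ hx₀.1 hT hright
  · have hsub : uIcc x₀ (x₀ - L / 2) ⊆ uIcc 0 L := by
      rw [uIcc_of_ge (by linarith), uIcc_of_le (by linarith)]
      exact Icc_subset_Icc (by linarith) hx₀.2
    have hint : IntervalIntegrable (fun u ↦ f (x₀ - u)) volume 0 (L / 2) := by
      simpa using (hf.mono_set hsub).comp_sub_left x₀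
    calc ∫ u in 0..L / 2, φ u ≤ ∫ u in 0..L / 2, f (x₀ - u) :=
          integral_mono_on hT hφ hint fun u hu ↦ by
            simpa [abs_of_nonneg hu.1] using
              hφf (x₀ - u) ⟨by linarith [hu.2], by linarith [hx₀.2, hu.1]⟩
      _ ≤ ∫ x in 0..L, f x := integral_comp_sub_le_integral hf hf₀ hx₀.2 hT (by linarith)

end HalfInterval

lemma integral_inv_add_mul {b c T : ℝ} (hb : 0 < b) (hc : 0 < c) (hT : 0 ≤ T) :
    ∫ u in 0..T, (b + c * u)⁻¹ = c⁻¹ * log ((b + c * T) / b) := by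
  simp_rw [add_comm b]
  rw [integral_comp_mul_add (f := fun x ↦ x⁻¹) hc.ne', mul_zero, zero_add,
    integral_inv_of_pos hb (by positivity), smul_eq_mul]

lemma inv_two_mul_sq_add_le_rpow_neg_two {y a b : ℝ} (hy : 0 < y) (hle : y ≤ a + b) :
    (2 * a ^ 2 + 2 * b ^ 2)⁻¹ ≤ y ^ (-2 : ℝ) := by
  have hy2 : y ^ 2 ≤ 2 * a ^ 2 + 2 * b ^ 2 := by
    nlinarith [sq_nonneg (a - b), pow_le_pow_left₀ hy.le hle 2]
  rw [rpow_neg hy.le, rpow_two]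
  exact inv_anti₀ (by positivity) hy2

lemma mul_sqrt_mul_rpow_neg_half_le {a C T E : ℝ} (ha : 0 ≤ a) (hC : 0 ≤ C) (hE : 0 ≤ E)
    (h : C ^ 2 * T ≤ a ^ 2 * E) : C * √T * E ^ (-(1 : ℝ) / 2) ≤ a := by
  rw [neg_div, rpow_neg hE, ← sqrt_eq_rpow, ← div_eq_mul_inv]
  refine div_le_of_le_mul₀ (sqrt_nonneg E) ha ?_
  rw [← sqrt_sq hC, ← sqrt_sq ha, ← sqrt_mul (sq_nonneg C), ← sqrt_mul (sq_nonneg a)]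
  exact sqrt_le_sqrt h

theorem min_lower_bound_m_eq_three_general
    (L C K : ℝ) (hC : 0 < C)
    (h : ℝ → ℝ) (hcont : ContinuousOn h (Icc (0:ℝ) L))
    (hpos : ∀ x ∈ Icc (0:ℝ) L, 0 < h x)
    (xc : ℝ) (hxc : xc ∈ Icc (0:ℝ) L)
    (hHolder : ∀ x ∈ Icc (0:ℝ) L, h x ≤ h xc + C * |x - xc| ^ ((1:ℝ) / 2))
    (hint : (∫ x in (0:ℝ)..L, h x ^ (-2 : ℝ)) ≤ K) :
    C * Real.sqrt (L / 2) * (Real.exp (2 * C ^ 2 * K) - 1) ^ (-(1:ℝ) / 2) ≤ h xc := by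
  set a := h xc
  have ha : 0 < a := hpos xc hxc
  have hL : 0 ≤ L := hxc.1.trans hxc.2
  have hf : IntervalIntegrable (fun x ↦ h x ^ (-2 : ℝ)) volume 0 L :=
    (hcont.rpow_const fun x hx ↦ Or.inl (hpos x hx).ne').intervalIntegrable_of_Icc hL
  have hφ : IntervalIntegrable (fun u ↦ (2 * a ^ 2 + 2 * C ^ 2 * u)⁻¹) volume 0 (L / 2) :=
    (ContinuousOn.inv₀ (by fun_prop) fun u hu ↦ by nlinarith [hu.1]).intervalIntegrable_of_Icc
      (by linarith)
  have hφf : ∀ x ∈ Icc 0 L, (2 * a ^ 2 + 2 * C ^ 2 * |x - xc|)⁻¹ ≤ h x ^ (-2 : ℝ) := by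
    intro x hx
    have := inv_two_mul_sq_add_le_rpow_neg_two (hpos x hx) (hHolder x hx)
    rwa [mul_pow, ← sqrt_eq_rpow, sq_sqrt (abs_nonneg _), ← mul_assoc] at this
  have hlog : (2 * C ^ 2)⁻¹ * log ((2 * a ^ 2 + 2 * C ^ 2 * (L / 2)) / (2 * a ^ 2)) ≤ K := by
    rw [← integral_inv_add_mul (by positivity) (by positivity) (by positivity)]
    exact (integral_half_le_integral_of_le_comp_abs_sub hxc hf
      (fun x hx ↦ (rpow_pos_of_pos (hpos x hx) _).le) hφ hφf).trans hint
  rw [inv_mul_le_iff₀ (by positivity), log_le_iff_le_exp (by positivity),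
    div_le_iff₀ (by positivity)] at hlog
  have hkey : C ^ 2 * (L / 2) ≤ a ^ 2 * (exp (2 * C ^ 2 * K) - 1) := by linarith
  have hE : 0 ≤ exp (2 * C ^ 2 * K) - 1 :=
    nonneg_of_mul_nonneg_right ((by positivity : 0 ≤ C ^ 2 * (L / 2)).trans hkey) (by positivity)
  exact mul_sqrt_mul_rpow_neg_half_le ha.le hC.le hE hkey

/-- Positive lower bound for the minimum film thickness in the case `m = 3`. -/
theorem min_lower_bound_m_eq_three
    (L C K : ℝ) (hL : 0 < L) (hC : 0 < C) (hK : 0 < K)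
    (h : ℝ → ℝ) (hcont : ContinuousOn h (Icc (0:ℝ) L))
    (hpos : ∀ x ∈ Icc (0:ℝ) L, 0 < h x)
    (xc : ℝ) (hxc : xc ∈ Icc (0:ℝ) L)
    (hmin : ∀ x ∈ Icc (0:ℝ) L, h xc ≤ h x)
    (hHolder : ∀ x ∈ Icc (0:ℝ) L, h x ≤ h xc + C * |x - xc| ^ ((1:ℝ) / 2))
    (hint : (∫ x in (0:ℝ)..L, h x ^ (-2 : ℝ)) ≤ K) :
    C * Real.sqrt (L / 2) * (Real.exp (2 * C ^ 2 * K) - 1) ^ (-(1:ℝ) / 2) ≤ h xc :=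
  min_lower_bound_m_eq_three_general L C K hC h hcont hpos xc hxc hHolder hint
end

section
/- Let L > 0 and q ≥ 1 be real numbers and set θ = (2/5)(1 − 1/q). Then there exists a constant C > 0, depending only on L and q, such that for every twice continuously differentiable function u : [0,L] → ℝ, (∫₀^L |u(x)|^q dx)^{1/q} ≤ C [ (∫₀^L |u(x)| dx)^{1−θ} · (∫₀^L u''(x)² dx)^{θ/2} + ∫₀^L |u(x)| dx ]. -/
open Set MeasureTheory intervalIntegral Filter Real Topology

/-!
Let `M = |u x₀|` be the maximum of `|u|`. On an interval `J ∋ x₀` of length `4ℓ` the mean value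
theorem gives a point where `|u'| ≤ 2M / 4ℓ`, and by Cauchy–Schwarz `u'` oscillates on `J` by at
most `√(4ℓ) ‖u''‖₂`. On a subinterval `I ∋ x₀` of length `ℓ`, `|u|` drops somewhere to its mean
`≤ ‖u‖₁ / ℓ`, so `M ≤ ‖u‖₁ / ℓ + M / 2 + 2 ℓ^{3/2} ‖u''‖₂`. Optimising over `ℓ ≤ L / 4` gives
`M ≲ ‖u‖₁^{3/5} ‖u''‖₂^{2/5} + ‖u‖₁ / L`, and `‖u‖_q ≤ M^{1 - 1/q} ‖u‖₁^{1/q}` finishes the proof.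
-/

theorem exists_Icc_add_subset_Icc {p q x ℓ : ℝ} (hx : x ∈ Icc p q) (hℓ : 0 ≤ ℓ)
    (hℓq : p + ℓ ≤ q) : ∃ a, Icc a (a + ℓ) ⊆ Icc p q ∧ x ∈ Icc a (a + ℓ) := by
  refine ⟨min x (q - ℓ), Icc_subset_Icc (le_min hx.1 (by linarith)) ?_, min_le_left _ _, ?_⟩
  · linarith [min_le_right x (q - ℓ)]
  · rcases le_total x (q - ℓ) with h | h
    · rw [min_eq_left h]; linarith
    · rw [min_eq_right h]; linarith [hx.2]

theorem integral_abs_le_sqrt_mul_sqrt_integral_sq {g : ℝ → ℝ} {a b : ℝ} (hab : a ≤ b)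
    (hg : ContinuousOn g (Icc a b)) :
    ∫ x in a..b, |g x| ≤ √(b - a) * √(∫ x in a..b, g x ^ 2) := by
  rw [integral_of_le hab, integral_of_le hab]
  have hint : IntegrableOn (fun x => |g x|) (Ioc a b) :=
    hg.abs.integrableOn_Icc.mono_set Ioc_subset_Icc_self
  have hint2 : IntegrableOn (fun x => |g x| ^ 2) (Ioc a b) :=
    (hg.abs.pow 2).integrableOn_Icc.mono_set Ioc_subset_Icc_self
  have hmem : MemLp (fun x => |g x|) (ENNReal.ofReal 2) (volume.restrict (Ioc a b)) := by
    rw [ENNReal.ofReal_ofNat]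
    exact (memLp_two_iff_integrable_sq hint.aestronglyMeasurable).2 hint2
  have h := integral_mul_le_Lp_mul_Lq_of_nonneg Real.HolderConjugate.two_two
    (Eventually.of_forall fun _ => zero_le_one) (Eventually.of_forall fun x => abs_nonneg (g x))
    (memLp_const 1) hmem
  simpa [sqrt_eq_rpow, Real.rpow_two, hab] using h

theorem abs_sub_le_integral_abs_of_hasDerivWithinAt {f f' : ℝ → ℝ} {a b x y : ℝ}
    (hf : ∀ t ∈ Icc a b, HasDerivWithinAt f (f' t) (Icc a b) t)
    (hf' : ContinuousOn f' (Icc a b)) (hx : x ∈ Icc a b) (hy : y ∈ Icc a b) :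
    |f x - f y| ≤ ∫ t in a..b, |f' t| := by
  wlog hyx : y ≤ x generalizing x y
  · rw [abs_sub_comm]; exact this hy hx (le_of_not_ge hyx)
  have hsub : Icc y x ⊆ Icc a b := Icc_subset_Icc hy.1 hx.2
  have hftc : ∫ t in y..x, f' t = f x - f y := by
    refine integral_eq_sub_of_hasDeriv_right_of_le hyx
      (fun t ht => (hf t (hsub ht)).continuousWithinAt.mono hsub) (fun t ht => ?_)
      ((hf'.mono (by rwa [uIcc_of_le hyx])).intervalIntegrable)
    exact ((hf t (hsub (Ioo_subset_Icc_self ht))).hasDerivAt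
      (Icc_mem_nhds (hy.1.trans_lt ht.1) (ht.2.trans_le hx.2))).hasDerivWithinAt
  rw [← hftc]
  calc |∫ t in y..x, f' t| ≤ ∫ t in y..x, |f' t| := abs_integral_le_integral_abs hyx
    _ ≤ ∫ t in a..b, |f' t| :=
      integral_mono_interval hy.1 hyx hx.2 (Eventually.of_forall fun _ => abs_nonneg _)
        (hf'.abs.intervalIntegrable_of_Icc (hy.1.trans (hyx.trans hx.2)))

theorem abs_deriv_le_of_abs_le {f f' f'' : ℝ → ℝ} {a b M : ℝ} (hab : a < b)
    (hf : ∀ x ∈ Icc a b, HasDerivWithinAt f (f' x) (Icc a b) x)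
    (hf' : ∀ x ∈ Icc a b, HasDerivWithinAt f' (f'' x) (Icc a b) x)
    (hf'' : ContinuousOn f'' (Icc a b)) (hM : ∀ x ∈ Icc a b, |f x| ≤ M) :
    ∀ x ∈ Icc a b, |f' x| ≤ 2 * M / (b - a) + √(b - a) * √(∫ x in a..b, f'' x ^ 2) := by
  intro x hx
  have hba : 0 < b - a := sub_pos.2 hab
  obtain ⟨z, hz, hslope⟩ := exists_hasDerivAt_eq_slope f f' hab
    (fun t ht => (hf t ht).continuousWithinAt)
    (fun t ht => (hf t (Ioo_subset_Icc_self ht)).hasDerivAt (Icc_mem_nhds ht.1 ht.2))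
  have hz' : |f' z| ≤ 2 * M / (b - a) := by
    rw [hslope, abs_div, abs_of_pos hba]
    gcongr
    calc |f b - f a| ≤ |f b| + |f a| := abs_sub _ _
      _ ≤ 2 * M := by linarith [hM b (right_mem_Icc.2 hab.le), hM a (left_mem_Icc.2 hab.le)]
  have hxz : |f' x - f' z| ≤ √(b - a) * √(∫ x in a..b, f'' x ^ 2) :=
    (abs_sub_le_integral_abs_of_hasDerivWithinAt hf' hf'' hx (Ioo_subset_Icc_self hz)).trans
      (integral_abs_le_sqrt_mul_sqrt_integral_sq hab.le hf'')
  linarith [abs_sub_abs_le_abs_sub (f' x) (f' z)]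

theorem abs_le_integral_abs_div_add {f f' : ℝ → ℝ} {a b K : ℝ} (hab : a < b)
    (hf : ∀ x ∈ Icc a b, HasDerivWithinAt f (f' x) (Icc a b) x)
    (hK : ∀ x ∈ Icc a b, |f' x| ≤ K) :
    ∀ x ∈ Icc a b, |f x| ≤ (∫ t in a..b, |f t|) / (b - a) + K * (b - a) := by
  intro x hx
  have hba : 0 < b - a := sub_pos.2 hab
  have hfc : ContinuousOn f (Icc a b) := fun t ht => (hf t ht).continuousWithinAt
  obtain ⟨y, hy, hmin⟩ := isCompact_Icc.exists_isMinOn (nonempty_Icc.2 hab.le) hfc.abs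
  have hfy : |f y| ≤ (∫ t in a..b, |f t|) / (b - a) := by
    rw [le_div_iff₀ hba, mul_comm, ← smul_eq_mul, ← intervalIntegral.integral_const]
    exact integral_mono_on hab.le intervalIntegrable_const
      (hfc.abs.intervalIntegrable_of_Icc hab.le) fun t ht => hmin ht
  have hxy : |f x - f y| ≤ K * (b - a) := by
    have h := (convex_Icc a b).norm_image_sub_le_of_norm_hasDerivWithin_le hf hK hy hx
    calc |f x - f y| ≤ K * |x - y| := h
      _ ≤ K * (b - a) := mul_le_mul_of_nonneg_left
        (abs_sub_le_of_le_of_le hx.1 hx.2 hy.1 hy.2) ((abs_nonneg _).trans (hK x hx))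
  linarith [abs_sub_abs_le_abs_sub (f x) (f y)]

theorem abs_le_integral_div_add_of_isMaxOn {u u' u'' : ℝ → ℝ} {L x₀ ℓ : ℝ}
    (hu : ∀ x ∈ Icc 0 L, HasDerivWithinAt u (u' x) (Icc 0 L) x)
    (hu' : ∀ x ∈ Icc 0 L, HasDerivWithinAt u' (u'' x) (Icc 0 L) x)
    (hu'' : ContinuousOn u'' (Icc 0 L)) (hx₀ : x₀ ∈ Icc 0 L)
    (hmax : IsMaxOn (fun x => |u x|) (Icc 0 L) x₀) (hℓ : 0 < ℓ) (hℓL : 4 * ℓ ≤ L) :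
    |u x₀| ≤ 2 * (∫ x in 0..L, |u x|) / ℓ + 4 * ℓ * √ℓ * √(∫ x in 0..L, u'' x ^ 2) := by
  have huc : ContinuousOn u (Icc 0 L) := fun x hx => (hu x hx).continuousWithinAt
  set M := |u x₀|
  set N := ∫ x in 0..L, |u x|
  set S := √(∫ x in 0..L, u'' x ^ 2)
  obtain ⟨a, hJ, hx₀J⟩ := exists_Icc_add_subset_Icc (ℓ := 4 * ℓ) hx₀ (by linarith) (by linarith)
  obtain ⟨b, hI, hx₀I⟩ := exists_Icc_add_subset_Icc hx₀J hℓ.le (by linarith)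
  have hIL : Icc b (b + ℓ) ⊆ Icc 0 L := hI.trans hJ
  have hQJ : √(∫ x in a..a + 4 * ℓ, u'' x ^ 2) ≤ S :=
    sqrt_le_sqrt <| integral_mono_interval (hJ (left_mem_Icc.2 (by linarith))).1 (by linarith)
      (hJ (right_mem_Icc.2 (by linarith))).2 (Eventually.of_forall fun _ => sq_nonneg _)
      ((hu''.pow 2).intervalIntegrable_of_Icc (by linarith))
  have hu'J : ∀ x ∈ Icc a (a + 4 * ℓ), |u' x| ≤ M / (2 * ℓ) + 2 * √ℓ * S := by
    intro x hx
    have h := abs_deriv_le_of_abs_le (by linarith)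
      (fun t ht => (hu t (hJ ht)).mono hJ) (fun t ht => (hu' t (hJ ht)).mono hJ)
      (hu''.mono hJ) (fun t ht => hmax (hJ ht)) x hx
    have h4 : √(a + 4 * ℓ - a) = 2 * √ℓ := by
      rw [add_sub_cancel_left, sqrt_mul' _ hℓ.le, show (4 : ℝ) = 2 ^ 2 by norm_num,
        sqrt_sq zero_le_two]
    rw [h4, add_sub_cancel_left] at h
    calc |u' x| ≤ 2 * M / (4 * ℓ) + 2 * √ℓ * √(∫ x in a..a + 4 * ℓ, u'' x ^ 2) := h
      _ ≤ M / (2 * ℓ) + 2 * √ℓ * S := by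
        rw [show 2 * M / (4 * ℓ) = M / (2 * ℓ) by field_simp; ring]
        gcongr
  have hNI : ∫ x in b..b + ℓ, |u x| ≤ N :=
    integral_mono_interval (hIL (left_mem_Icc.2 (by linarith))).1 (by linarith)
      (hIL (right_mem_Icc.2 (by linarith))).2 (Eventually.of_forall fun _ => abs_nonneg _)
      (huc.abs.intervalIntegrable_of_Icc (by linarith))
  have h := abs_le_integral_abs_div_add (by linarith) (fun t ht => (hu t (hIL ht)).mono hIL)
    (fun t ht => hu'J t (hI ht)) x₀ hx₀I
  rw [add_sub_cancel_left] at h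
  have : M ≤ N / ℓ + M / 2 + 2 * ℓ * √ℓ * S := by
    calc M ≤ (∫ x in b..b + ℓ, |u x|) / ℓ + (M / (2 * ℓ) + 2 * √ℓ * S) * ℓ := h
      _ ≤ N / ℓ + (M / (2 * ℓ) + 2 * √ℓ * S) * ℓ := by gcongr
      _ = N / ℓ + M / 2 + 2 * ℓ * √ℓ * S := by field_simp; ring
  rw [mul_div_assoc]
  linarith

theorem le_of_forall_le_div_add_mul_sqrt {L M N S : ℝ} (hL : 0 < L) (hN : 0 ≤ N) (hS : 0 ≤ S)
    (h : ∀ ℓ, 0 < ℓ → 4 * ℓ ≤ L → M ≤ 2 * N / ℓ + 4 * ℓ * √ℓ * S) :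
    M ≤ 6 * (N ^ (3 / 5 : ℝ) * S ^ (2 / 5 : ℝ)) + 24 / L * N := by
  have key : ∀ ℓ, 0 < ℓ → 4 * ℓ ≤ L → S * (ℓ ^ 2 * √ℓ) ≤ N → M ≤ 6 * N / ℓ := by
    intro ℓ hℓ hℓL hSℓ
    have : 4 * ℓ * √ℓ * S ≤ 4 * N / ℓ := by
      rw [le_div_iff₀ hℓ]; linarith
    calc M ≤ 2 * N / ℓ + 4 * N / ℓ := by linarith [h ℓ hℓ hℓL]
      _ = 6 * N / ℓ := by ring
  have hP : 0 ≤ N ^ (3 / 5 : ℝ) * S ^ (2 / 5 : ℝ) := by positivity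
  set r := L / 4 with hr_def
  have hr : 0 < r := by positivity
  by_cases hNr : S * (r ^ 2 * √r) ≤ N
  · have := key r hr (by linarith [hr_def]) hNr
    rw [show 6 * N / r = 24 / L * N by field_simp; ring] at this
    linarith
  rw [not_le] at hNr
  have hSpos : 0 < S := by
    rcases hS.eq_or_lt with h0 | h0
    · rw [← h0, zero_mul] at hNr; linarith
    · exact h0
  rcases hN.eq_or_lt with hN0 | hNpos
  · subst hN0
    have hlim : Tendsto (fun ℓ => 4 * ℓ * √ℓ * S) (𝓝[>] 0) (𝓝 0) := by
      have : Continuous fun ℓ : ℝ => 4 * ℓ * √ℓ * S := by fun_prop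
      simpa using (this.tendsto 0).mono_left nhdsWithin_le_nhds
    have hM : M ≤ 0 := ge_of_tendsto hlim <| eventually_of_mem (Ioo_mem_nhdsGT hr)
      fun ℓ hℓ => by simpa using h ℓ hℓ.1 (by linarith [hℓ.2, hr_def])
    simpa [zero_rpow] using hM
  -- `ℓ = (N / S) ^ (2/5)` balances the two terms of `h`; it is admissible since `ℓ < L / 4`.
  set ℓ := (N / S) ^ (2 / 5 : ℝ) with hℓ_def
  have hNS : 0 < N / S := div_pos hNpos hSpos
  have hℓ : 0 < ℓ := rpow_pos_of_pos hNS _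
  have hℓ5 : ℓ ^ 2 * √ℓ = N / S := by
    rw [sqrt_eq_rpow, ← rpow_natCast, ← rpow_mul hNS.le, ← rpow_mul hNS.le, ← rpow_add hNS]
    norm_num
  have hℓr : ℓ < r := by
    by_contra! hrℓ
    have : S * (r ^ 2 * √r) ≤ S * (ℓ ^ 2 * √ℓ) := by gcongr
    rw [hℓ5, mul_div_cancel₀ _ hSpos.ne'] at this
    linarith
  have hNℓ : N / ℓ = N ^ (3 / 5 : ℝ) * S ^ (2 / 5 : ℝ) := by
    rw [hℓ_def, div_rpow hN hS, div_div_eq_mul_div, mul_div_right_comm,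
      ← rpow_one_sub' hN (by norm_num)]
    norm_num
  have := key ℓ hℓ (by linarith [hr_def]) (by rw [hℓ5, mul_div_cancel₀ _ hSpos.ne'])
  rw [mul_div_assoc, hNℓ] at this
  have : 0 ≤ 24 / L * N := by positivity
  linarith

theorem integral_abs_rpow_le_mul_integral_abs {α : Type*} [MeasurableSpace α] {μ : Measure α}
    {f : α → ℝ} {M q : ℝ} (hq : 1 ≤ q) (hf : Integrable f μ) (hM : ∀ᵐ x ∂μ, |f x| ≤ M) :
    ∫ x, |f x| ^ q ∂μ ≤ M ^ (q - 1) * ∫ x, |f x| ∂μ := by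
  rw [← MeasureTheory.integral_const_mul]
  refine integral_mono_of_nonneg (Eventually.of_forall fun x => by positivity)
    (hf.abs.const_mul _) (hM.mono fun x hx => ?_)
  calc |f x| ^ q = |f x| ^ (q - 1) * |f x| := by
        rw [← rpow_add_one' (abs_nonneg _) (by linarith), sub_add_cancel]
    _ ≤ M ^ (q - 1) * |f x| := by gcongr

theorem rpow_mul_rpow_le_of_le_add {q M N Q A B : ℝ} (hq : 1 ≤ q) (hM : 0 ≤ M) (hN : 0 ≤ N)
    (hQ : 0 ≤ Q) (hA : 0 ≤ A) (hB : 0 ≤ B)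
    (h : M ≤ A * (N ^ (3 / 5 : ℝ) * √Q ^ (2 / 5 : ℝ)) + B * N) :
    (M ^ (q - 1) * N) ^ (1 / q)
      ≤ (A ^ (1 - 1 / q) + B ^ (1 - 1 / q))
        * (N ^ (1 - 2 / 5 * (1 - 1 / q)) * Q ^ (2 / 5 * (1 - 1 / q) / 2) + N) := by
  have hq0 : 0 < q := by linarith
  set α := 1 - 1 / q with hα
  have hα0 : 0 ≤ α := by rw [hα, sub_nonneg, div_le_one hq0]; exact hq
  have hα1 : α ≤ 1 := by rw [hα]; linarith [one_div_pos.2 hq0]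
  have hsplit : (M ^ (q - 1) * N) ^ (1 / q) = M ^ α * N ^ (1 / q) := by
    rw [mul_rpow (rpow_nonneg hM _) hN, ← rpow_mul hM]
    congr 2
    rw [hα]
    field_simp
  have hMα : M ^ α ≤ A ^ α * (N ^ (3 / 5 : ℝ) * √Q ^ (2 / 5 : ℝ)) ^ α + B ^ α * N ^ α := by
    calc M ^ α ≤ (A * (N ^ (3 / 5 : ℝ) * √Q ^ (2 / 5 : ℝ)) + B * N) ^ α :=
          rpow_le_rpow hM h hα0
      _ ≤ (A * (N ^ (3 / 5 : ℝ) * √Q ^ (2 / 5 : ℝ))) ^ α + (B * N) ^ α :=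
          rpow_add_le_add_rpow (by positivity) (by positivity) hα0 hα1
      _ = _ := by rw [mul_rpow hA (by positivity), mul_rpow hB hN]
  have hX : (N ^ (3 / 5 : ℝ) * √Q ^ (2 / 5 : ℝ)) ^ α * N ^ (1 / q)
      = N ^ (1 - 2 / 5 * α) * Q ^ (2 / 5 * α / 2) := by
    rw [mul_rpow (by positivity) (by positivity), sqrt_eq_rpow, ← rpow_mul hN, ← rpow_mul hQ,
      ← rpow_mul hQ, mul_right_comm, ← rpow_add' hN (by nlinarith)]
    congr 2 <;> ring
  have hN1 : N ^ α * N ^ (1 / q) = N := by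
    rw [← rpow_add' hN (by rw [hα]; norm_num), hα, sub_add_cancel, rpow_one]
  have hXpos : 0 ≤ N ^ (1 - 2 / 5 * α) * Q ^ (2 / 5 * α / 2) := by positivity
  have hAα : 0 ≤ A ^ α := rpow_nonneg hA α
  have hBα : 0 ≤ B ^ α := rpow_nonneg hB α
  rw [hsplit]
  calc M ^ α * N ^ (1 / q)
      ≤ (A ^ α * (N ^ (3 / 5 : ℝ) * √Q ^ (2 / 5 : ℝ)) ^ α + B ^ α * N ^ α) * N ^ (1 / q) := by
        gcongr
    _ = A ^ α * (N ^ (1 - 2 / 5 * α) * Q ^ (2 / 5 * α / 2)) + B ^ α * N := by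
        rw [add_mul, mul_assoc, hX, mul_assoc, hN1]
    _ ≤ _ := by nlinarith [mul_nonneg hAα hN, mul_nonneg hBα hXpos]

/-- One-dimensional Gagliardo–Nirenberg interpolation on `[0,L]`:
`‖u‖_q ≤ C (‖u‖₁^{1−θ} ‖u''‖₂^θ + ‖u‖₁)` with `θ = (2/5)(1 − 1/q)`. -/
theorem gagliardo_nirenberg_L1_Hxx
    (L q : ℝ) (hL : 0 < L) (hq : 1 ≤ q) :
    ∃ C : ℝ, 0 < C ∧
      ∀ u u' u'' : ℝ → ℝ,
        (∀ x ∈ Icc (0:ℝ) L, HasDerivWithinAt u (u' x) (Icc (0:ℝ) L) x) →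
        (∀ x ∈ Icc (0:ℝ) L, HasDerivWithinAt u' (u'' x) (Icc (0:ℝ) L) x) →
        ContinuousOn u'' (Icc (0:ℝ) L) →
        (∫ x in (0:ℝ)..L, |u x| ^ q) ^ (1 / q)
          ≤ C * ((∫ x in (0:ℝ)..L, |u x|) ^ (1 - (2 / 5) * (1 - 1 / q))
                  * (∫ x in (0:ℝ)..L, (u'' x) ^ 2) ^ ((2 / 5) * (1 - 1 / q) / 2)
                + ∫ x in (0:ℝ)..L, |u x|) := by
  refine ⟨6 ^ (1 - 1 / q) + (24 / L) ^ (1 - 1 / q), by positivity, ?_⟩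
  intro u u' u'' hu hu' hu''
  have huc : ContinuousOn u (Icc 0 L) := fun x hx => (hu x hx).continuousWithinAt
  have hN : 0 ≤ ∫ x in 0..L, |u x| := integral_nonneg hL.le fun _ _ => abs_nonneg _
  obtain ⟨x₀, hx₀, hmax⟩ := isCompact_Icc.exists_isMaxOn (nonempty_Icc.2 hL.le) huc.abs
  have hsup := le_of_forall_le_div_add_mul_sqrt hL hN (sqrt_nonneg _)
    fun ℓ hℓ hℓL => abs_le_integral_div_add_of_isMaxOn hu hu' hu'' hx₀ hmax hℓ hℓL
  have hLq : ∫ x in 0..L, |u x| ^ q ≤ |u x₀| ^ (q - 1) * ∫ x in 0..L, |u x| := by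
    simp only [integral_of_le hL.le]
    exact integral_abs_rpow_le_mul_integral_abs hq
      (huc.integrableOn_Icc.mono_set Ioc_subset_Icc_self)
      ((ae_restrict_mem measurableSet_Ioc).mono fun x hx => hmax (Ioc_subset_Icc_self hx))
  calc (∫ x in 0..L, |u x| ^ q) ^ (1 / q)
      ≤ (|u x₀| ^ (q - 1) * ∫ x in 0..L, |u x|) ^ (1 / q) :=
        rpow_le_rpow (integral_nonneg hL.le fun _ _ => by positivity) hLq (by positivity)
    _ ≤ _ := rpow_mul_rpow_le_of_le_add hq (abs_nonneg _) hN
        (integral_nonneg hL.le fun _ _ => sq_nonneg _) (by norm_num) (by positivity) hsup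
end
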